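/- arXiv:1903.12430 — 6 statements merged into one kernel-verified Lean document; each statement's English description precedes it below -/
import Mathlib

section
/- Time-decay sup-norm estimate via the dilation operator J: there is an absolute constant C > 0 such that for every t > 0 and every continuously differentiable φ : (0,∞) → ℂ with φ ∈ L²(ℝ⁺) and J_t φ ∈ L²(ℝ⁺) (where (J_t φ)(x) = x φ(x) + i t φ'(x)), one has sup_{x>0} |φ(x)| ≤ C t^{−1/2} ‖J_t φ‖_{L²(ℝ⁺)}^{1/2} ‖φ‖_{L²(ℝ⁺)}^{1/2}. -/
open MeasureTheory Set

/-- The `L²` norm of a function on the half line `(0, ∞)`. -/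
noncomputable def L2norm (φ : ℝ → ℂ) : ℝ :=
  Real.sqrt (∫ x in Set.Ioi (0:ℝ), ‖φ x‖ ^ 2)

/-- The dilation operator `(J_t φ)(x) = x φ(x) + i t φ'(x)`. -/
noncomputable def Jop (t : ℝ) (φ : ℝ → ℂ) : ℝ → ℂ :=
  fun x => (x : ℂ) * φ x + Complex.I * (t : ℂ) * deriv φ x

/-!
Put `f = ‖φ‖²`, so `f' = 2 ⟪φ, φ'⟫_ℝ`. Since `x ‖φ(x)‖²` is real,
`t ⟪φ, φ'⟫_ℝ = Im (J_t φ · conj φ)`, whence `|f'| ≤ (2 / t) ‖J_t φ‖ ‖φ‖`. Both `f` and `f'` are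
integrable on `(x, ∞)`, so `f` vanishes at infinity and
`‖φ(x)‖² ≤ ∫_x^∞ |f'| ≤ (2 / t) ‖J_t φ‖_{L²} ‖φ‖_{L²}` by Cauchy–Schwarz; this gives `C = √2`.
-/

open ComplexConjugate
open scoped InnerProductSpace

lemma norm_le_integral_norm_deriv_of_integrableOn_Ioi {E : Type*} [NormedAddCommGroup E]
    [NormedSpace ℝ E] [CompleteSpace E] {f f' : ℝ → E} {a : ℝ}
    (hderiv : ∀ x ∈ Ici a, HasDerivAt f (f' x) x) (hf : IntegrableOn f (Ioi a))
    (hf' : IntegrableOn f' (Ioi a)) :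
    ‖f a‖ ≤ ∫ x in Ioi a, ‖f' x‖ := by
  have hlim := tendsto_zero_of_hasDerivAt_of_integrableOn_Ioi
    (fun x hx => hderiv x (mem_Ici_of_Ioi hx)) hf' hf
  calc ‖f a‖ = ‖∫ x in Ioi a, f' x‖ := by
        rw [integral_Ioi_of_hasDerivAt_of_tendsto' hderiv hf' hlim, zero_sub, norm_neg]
    _ ≤ ∫ x in Ioi a, ‖f' x‖ := norm_integral_le_integral_norm _

lemma integral_norm_mul_norm_le_sqrt_mul_sqrt {α E : Type*} [MeasurableSpace α] {μ : Measure α}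
    [NormedAddCommGroup E] {f g : α → E} (hf : MemLp f 2 μ) (hg : MemLp g 2 μ) :
    ∫ a, ‖f a‖ * ‖g a‖ ∂μ ≤ √(∫ a, ‖f a‖ ^ 2 ∂μ) * √(∫ a, ‖g a‖ ^ 2 ∂μ) := by
  have h := integral_mul_norm_le_Lp_mul_Lq (p := 2) (q := 2) Real.HolderConjugate.two_two
    (by simpa using hf) (by simpa using hg)
  simpa [Real.sqrt_eq_rpow] using h

lemma im_dilation_mul_conj (x t : ℝ) (z w : ℂ) :
    ((x * z + Complex.I * t * w) * conj z).im = t * ⟪z, w⟫_ℝ := by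
  simp only [Complex.mul_im, Complex.add_re, Complex.mul_re, Complex.ofReal_re,
    Complex.ofReal_im, zero_mul, sub_zero, Complex.I_re, Complex.I_im, mul_zero, sub_self, one_mul,
    zero_add, zero_sub, Complex.conj_im, mul_neg, Complex.add_im, add_zero, Complex.conj_re,
    Complex.inner, sub_neg_eq_add]
  ring

lemma abs_mul_inner_le_norm_dilation_mul_norm (x t : ℝ) (z w : ℂ) :
    |t * ⟪z, w⟫_ℝ| ≤ ‖x * z + Complex.I * t * w‖ * ‖z‖ := by
  rw [← im_dilation_mul_conj x, ← Complex.norm_conj z, ← norm_mul]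
  exact Complex.abs_im_le_norm _

lemma norm_two_mul_inner_deriv_le_norm_Jop {t : ℝ} (ht : 0 < t) (φ : ℝ → ℂ) (x : ℝ) :
    ‖2 * ⟪φ x, deriv φ x⟫_ℝ‖ ≤ 2 / t * (‖Jop t φ x‖ * ‖φ x‖) := by
  have h := abs_mul_inner_le_norm_dilation_mul_norm x t (φ x) (deriv φ x)
  rw [abs_mul, abs_of_pos ht] at h
  rw [Real.norm_eq_abs, abs_mul, abs_two, div_mul_eq_mul_div, le_div_iff₀ ht]
  unfold Jop
  linarith

lemma continuousOn_Jop {s : Set ℝ} (hs : IsOpen s) (t : ℝ) {φ : ℝ → ℂ}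
    (hφ : ContDiffOn ℝ 1 φ s) : ContinuousOn (Jop t φ) s :=
  (Complex.continuous_ofReal.continuousOn.mul hφ.continuousOn).add
    (continuousOn_const.mul (hφ.continuousOn_deriv_of_isOpen hs le_rfl))

lemma ContinuousOn.memLp_two_of_integrableOn_sq_norm {E : Type*} [NormedAddCommGroup E]
    {f : ℝ → E} {s : Set ℝ} (hs : MeasurableSet s) (hf : ContinuousOn f s)
    (h2 : IntegrableOn (fun x => ‖f x‖ ^ 2) s) : MemLp f 2 (volume.restrict s) :=
  (memLp_two_iff_integrable_sq_norm (hf.aestronglyMeasurable hs)).2 h2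

lemma sq_norm_le_integral_norm_Jop_mul_norm {t : ℝ} (ht : 0 < t) {φ : ℝ → ℂ}
    (hφ : ContDiffOn ℝ 1 φ (Ioi 0)) (hφ2 : IntegrableOn (fun x => ‖φ x‖ ^ 2) (Ioi 0))
    (hprod : IntegrableOn (fun u => ‖Jop t φ u‖ * ‖φ u‖) (Ioi 0)) {x : ℝ} (hx : 0 < x) :
    ‖φ x‖ ^ 2 ≤ 2 / t * ∫ u in Ioi 0, ‖Jop t φ u‖ * ‖φ u‖ := by
  have hsub : Ici x ⊆ Ioi 0 := Ici_subset_Ioi.2 hx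
  have hIoi : Ioi x ⊆ Ioi 0 := Ioi_subset_Ioi hx.le
  have hbound : IntegrableOn (fun u => 2 / t * (‖Jop t φ u‖ * ‖φ u‖)) (Ioi x) :=
    (hprod.mono_set hIoi).const_mul _
  have hderiv : ∀ u ∈ Ici x, HasDerivAt (‖φ ·‖ ^ 2) (2 * ⟪φ u, deriv φ u⟫_ℝ) u := fun u hu =>
    ((hφ.differentiableOn one_ne_zero u (hsub hu)).differentiableAt
      (isOpen_Ioi.mem_nhds (hsub hu))).hasDerivAt.norm_sq
  have hderiv_int : IntegrableOn (fun u => 2 * ⟪φ u, deriv φ u⟫_ℝ) (Ioi x) := by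
    refine hbound.mono' ?_ (ae_of_all _ fun u => norm_two_mul_inner_deriv_le_norm_Jop ht φ u)
    have hdφ := hφ.continuousOn_deriv_of_isOpen isOpen_Ioi le_rfl
    exact ((continuousOn_const.mul (hφ.continuousOn.inner hdφ)).mono hIoi).aestronglyMeasurable
      measurableSet_Ioi
  calc ‖φ x‖ ^ 2 = ‖‖φ x‖ ^ 2‖ := by rw [Real.norm_of_nonneg (by positivity)]
    _ ≤ ∫ u in Ioi x, ‖2 * ⟪φ u, deriv φ u⟫_ℝ‖ :=
      norm_le_integral_norm_deriv_of_integrableOn_Ioi hderiv (hφ2.mono_set hIoi) hderiv_int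
    _ ≤ ∫ u in Ioi x, 2 / t * (‖Jop t φ u‖ * ‖φ u‖) :=
      setIntegral_mono hderiv_int.norm hbound fun u => norm_two_mul_inner_deriv_le_norm_Jop ht φ u
    _ ≤ 2 / t * ∫ u in Ioi 0, ‖Jop t φ u‖ * ‖φ u‖ := by
      rw [integral_const_mul]
      exact mul_le_mul_of_nonneg_left (setIntegral_mono_set hprod
        (ae_of_all _ fun u => by positivity) hIoi.eventuallyLE) (by positivity)

lemma sqrt_two_mul_rpow_le_of_sq_le {y a b t : ℝ} (ht : 0 < t) (ha : 0 ≤ a)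
    (h : y ^ 2 ≤ 2 / t * (a * b)) :
    y ≤ √2 * t ^ (-(1/2) : ℝ) * a ^ ((1:ℝ)/2) * b ^ ((1:ℝ)/2) := by
  rw [Real.rpow_neg ht.le, ← Real.sqrt_eq_rpow, ← Real.sqrt_eq_rpow, ← Real.sqrt_eq_rpow,
    ← Real.sqrt_inv, ← Real.sqrt_mul zero_le_two, ← Real.sqrt_mul (by positivity),
    ← Real.sqrt_mul (by positivity)]
  refine Real.le_sqrt_of_sq_le ?_
  calc y ^ 2 ≤ 2 / t * (a * b) := h
    _ = 2 * t⁻¹ * a * b := by ring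

/-- Time-decay sup-norm estimate via the dilation operator `J`. -/
theorem sup_bound_via_J :
    ∃ C > (0:ℝ), ∀ t : ℝ, 0 < t → ∀ φ : ℝ → ℂ,
      ContDiffOn ℝ 1 φ (Set.Ioi 0) →
      MeasureTheory.IntegrableOn (fun x => ‖φ x‖ ^ 2) (Set.Ioi 0) →
      MeasureTheory.IntegrableOn (fun x => ‖Jop t φ x‖ ^ 2) (Set.Ioi 0) →
      ∀ x : ℝ, 0 < x →
        ‖φ x‖ ≤ C * t ^ (-(1/2) : ℝ) * L2norm (Jop t φ) ^ ((1:ℝ)/2) *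
          L2norm φ ^ ((1:ℝ)/2) := by
  refine ⟨√2, by positivity, fun t ht φ hφ hφ2 hJ2 x hx => ?_⟩
  have hφL2 := hφ.continuousOn.memLp_two_of_integrableOn_sq_norm measurableSet_Ioi hφ2
  have hJL2 := (continuousOn_Jop isOpen_Ioi t hφ).memLp_two_of_integrableOn_sq_norm
    measurableSet_Ioi hJ2
  have hprod : IntegrableOn (fun u => ‖Jop t φ u‖ * ‖φ u‖) (Ioi 0) :=
    hJL2.norm.integrable_mul hφL2.norm
  refine sqrt_two_mul_rpow_le_of_sq_le ht (Real.sqrt_nonneg _) ?_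
  calc ‖φ x‖ ^ 2 ≤ 2 / t * ∫ u in Ioi 0, ‖Jop t φ u‖ * ‖φ u‖ :=
        sq_norm_le_integral_norm_Jop_mul_norm ht hφ hφ2 hprod hx
    _ ≤ 2 / t * (L2norm (Jop t φ) * L2norm φ) := by
      gcongr
      exact integral_norm_mul_norm_le_sqrt_mul_sqrt hJL2 hφL2
end

section
/- L² estimate of the derivative of the power nonlinearity: let p ≥ 1 and t > 0. There is a constant C depending only on p such that for every twice continuously differentiable v : (0,∞) → ℂ with v, v', J_t v ∈ L²(ℝ⁺), the function f := |v|^{p−1} v satisfies ‖f'‖_{L²(ℝ⁺)} ≤ C t^{−(p−1)/2} ‖J_t v‖_{L²(ℝ⁺)}^{(p−1)/2} ‖v‖_{L²(ℝ⁺)}^{(p−1)/2} ‖v'‖_{L²(ℝ⁺)}, and also ‖f'‖_{L²(ℝ⁺)} ≤ C ‖v'‖_{L²(ℝ⁺)}^{(p−1)/2} ‖v‖_{L²(ℝ⁺)}^{(p−1)/2} ‖v'‖_{L²(ℝ⁺)}. -/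
/-!
Since `‖v‖²` has derivative `2⟪v, v'⟫` and, together with it, is integrable on `(0, ∞)`, it
tends to `0` at infinity, so `‖v x‖² ≤ 2 ∫ |⟪v, v'⟫|`. By Cauchy–Schwarz this is at most
`2 ‖v‖ ‖v'‖`, and, since `t ⟪v, v'⟫ = ⟪i v, J_t v⟫`, also at most `2 t⁻¹ ‖v‖ ‖J_t v‖`.
The map `z ↦ |z|^(p-1) z` has derivative of operator norm at most `p |z|^(p-1)`, so
`|f'| ≤ p (sup |v|²)^((p-1)/2) |v'|` pointwise, and both estimates follow by integration.
-/

open MeasureTheory Set Topology Asymptotics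
open scoped InnerProductSpace

section PowerNonlinearity

variable {E : Type*} [NormedAddCommGroup E] [InnerProductSpace ℝ E]

theorem hasFDerivAt_norm_rpow_of_ne_zero {x : E} (hx : x ≠ 0) (q : ℝ) :
    HasFDerivAt (fun w : E ↦ ‖w‖ ^ q) ((q * ‖x‖ ^ (q - 2)) • innerSL ℝ x) x := by
  apply HasStrictFDerivAt.hasFDerivAt
  convert! (hasStrictFDerivAt_norm_sq x).rpow_const (p := q / 2) (by simp [hx]) using 0
  simp_rw [← Real.rpow_natCast_mul (norm_nonneg _), ← Nat.cast_smul_eq_nsmul ℝ, smul_smul]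
  ring_nf

theorem exists_hasFDerivAt_norm_rpow_smul {p : ℝ} (hp : 1 ≤ p) (z : E) :
    ∃ G' : E →L[ℝ] E, HasFDerivAt (fun w : E ↦ ‖w‖ ^ (p - 1) • w) G' z ∧
      ‖G'‖ ≤ p * ‖z‖ ^ (p - 1) := by
  rcases hp.eq_or_lt with rfl | hp
  · refine ⟨ContinuousLinearMap.id ℝ E, ?_, by simpa using ContinuousLinearMap.norm_id_le⟩
    convert hasFDerivAt_id (𝕜 := ℝ) z using 1
    ext w
    simp
  rcases eq_or_ne z 0 with rfl | hz
  · have hp' : p - 1 ≠ 0 := (sub_pos.2 hp).ne'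
    refine ⟨0, .of_isLittleO ?_, by simp [hp']⟩
    have hsmall : (fun w : E ↦ ‖w‖ ^ (p - 1)) =o[𝓝 0] (fun _ ↦ (1 : ℝ)) := by
      refine (isLittleO_one_iff ℝ).2 ?_
      simpa [hp'] using
        ((continuousAt_id (x := (0 : E))).norm.rpow_const (.inr (sub_pos.2 hp).le)).tendsto
    simpa using hsmall.smul_isBigO (isBigO_refl (fun w : E ↦ w) _)
  · refine ⟨‖z‖ ^ (p - 1) • ContinuousLinearMap.id ℝ E +
      (((p - 1) * ‖z‖ ^ (p - 1 - 2)) • innerSL ℝ z).smulRight z,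
      (hasFDerivAt_norm_rpow_of_ne_zero hz _).smul (hasFDerivAt_id z), ?_⟩
    have hz' : 0 < ‖z‖ := norm_pos_iff.2 hz
    have hpow : ‖z‖ ^ (p - 1 - 2) * ‖z‖ * ‖z‖ = ‖z‖ ^ (p - 1) := by
      rw [mul_assoc, ← sq, ← Real.rpow_natCast, ← Real.rpow_add hz']
      norm_num
    calc _ ≤ ‖z‖ ^ (p - 1) * 1 + (p - 1) * ‖z‖ ^ (p - 1 - 2) * ‖z‖ * ‖z‖ := by
          refine (norm_add_le _ _).trans (add_le_add ?_ ?_)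
          · rw [norm_smul, Real.norm_of_nonneg (by positivity)]
            gcongr
            exact ContinuousLinearMap.norm_id_le
          · rw [ContinuousLinearMap.norm_smulRight_apply, norm_smul, innerSL_apply_norm,
              Real.norm_of_nonneg (by nlinarith [Real.rpow_nonneg hz'.le (p - 1 - 2)])]
      _ = p * ‖z‖ ^ (p - 1) := by
          rw [mul_assoc, mul_assoc, ← mul_assoc (‖z‖ ^ _), hpow]; ring

theorem norm_deriv_norm_rpow_smul_le {p : ℝ} (hp : 1 ≤ p) {v : ℝ → E} {x : ℝ}
    (hv : DifferentiableAt ℝ v x) :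
    ‖deriv (fun y ↦ ‖v y‖ ^ (p - 1) • v y) x‖ ≤ p * ‖v x‖ ^ (p - 1) * ‖deriv v x‖ := by
  obtain ⟨G', hG, hG'⟩ := exists_hasFDerivAt_norm_rpow_smul hp (v x)
  have hcomp : HasDerivAt (fun y ↦ ‖v y‖ ^ (p - 1) • v y) (G' (deriv v x)) x :=
    hG.comp_hasDerivAt x hv.hasDerivAt
  rw [hcomp.deriv]
  exact G'.le_of_opNorm_le hG' _

end PowerNonlinearity

theorem norm_le_integral_norm_deriv_of_integrableOn_Ioi_s8 {F : Type*} [NormedAddCommGroup F]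
    [NormedSpace ℝ F] [CompleteSpace F] {g g' : ℝ → F} {a x : ℝ} (hx : a < x)
    (hderiv : ∀ y ∈ Ioi a, HasDerivAt g (g' y) y) (hg' : IntegrableOn g' (Ioi a))
    (hg : IntegrableOn g (Ioi a)) :
    ‖g x‖ ≤ ∫ y in Ioi a, ‖g' y‖ := by
  have hsub : Ioi x ⊆ Ioi a := Ioi_subset_Ioi hx.le
  have hderiv_x : ∀ y ∈ Ioi x, HasDerivAt g (g' y) y := fun y hy ↦ hderiv y (hsub hy)
  have hftc : ∫ y in Ioi x, g' y = 0 - g x :=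
    integral_Ioi_of_hasDerivAt_of_tendsto (hderiv x hx).continuousAt.continuousWithinAt hderiv_x
      (hg'.mono_set hsub)
      (tendsto_zero_of_hasDerivAt_of_integrableOn_Ioi hderiv_x (hg'.mono_set hsub)
        (hg.mono_set hsub))
  calc ‖g x‖ = ‖∫ y in Ioi x, g' y‖ := by rw [hftc, zero_sub, norm_neg]
    _ ≤ ∫ y in Ioi x, ‖g' y‖ := norm_integral_le_integral_norm _
    _ ≤ ∫ y in Ioi a, ‖g' y‖ :=
      setIntegral_mono_set hg'.norm (.of_forall fun _ ↦ norm_nonneg _) hsub.eventuallyLE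

theorem sq_norm_le_two_mul_integral_abs_inner {E : Type*} [NormedAddCommGroup E]
    [InnerProductSpace ℝ E] {v v' : ℝ → E} {a x : ℝ} (hx : a < x)
    (hderiv : ∀ y ∈ Ioi a, HasDerivAt v (v' y) y)
    (hv : IntegrableOn (fun y ↦ ‖v y‖ ^ 2) (Ioi a))
    (hinner : IntegrableOn (fun y ↦ ⟪v y, v' y⟫_ℝ) (Ioi a)) :
    ‖v x‖ ^ 2 ≤ 2 * ∫ y in Ioi a, |⟪v y, v' y⟫_ℝ| := by
  simpa [abs_mul, integral_const_mul] using
    norm_le_integral_norm_deriv_of_integrableOn_Ioi_s8 hx (fun y hy ↦ (hderiv y hy).norm_sq)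
      (hinner.const_mul 2) hv

theorem L2norm_nonneg (φ : ℝ → ℂ) : 0 ≤ L2norm φ := Real.sqrt_nonneg _

theorem integral_norm_mul_norm_le_L2norm_mul {f g : ℝ → ℂ}
    (hf : MemLp f 2 (volume.restrict (Ioi 0))) (hg : MemLp g 2 (volume.restrict (Ioi 0))) :
    ∫ x in Ioi 0, ‖f x‖ * ‖g x‖ ≤ L2norm f * L2norm g := by
  simpa [L2norm, Real.sqrt_eq_rpow] using
    integral_mul_norm_le_Lp_mul_Lq Real.HolderConjugate.two_two (by simpa using hf)
      (by simpa using hg)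

theorem L2norm_le_mul_of_norm_le {f g : ℝ → ℂ} {c : ℝ} (hc : 0 ≤ c)
    (hg : IntegrableOn (fun x ↦ ‖g x‖ ^ 2) (Ioi 0)) (hfg : ∀ x ∈ Ioi 0, ‖f x‖ ≤ c * ‖g x‖) :
    L2norm f ≤ c * L2norm g := by
  have hint : ∫ x in Ioi 0, ‖f x‖ ^ 2 ≤ ∫ x in Ioi 0, c ^ 2 * ‖g x‖ ^ 2 :=
    integral_mono_of_nonneg (.of_forall fun _ ↦ sq_nonneg _) (hg.const_mul _)
      ((ae_restrict_iff' measurableSet_Ioi).2 (.of_forall fun x hx ↦ by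
        simp only [← mul_pow]; exact pow_le_pow_left₀ (norm_nonneg _) (hfg x hx) 2))
  rw [integral_const_mul] at hint
  calc L2norm f ≤ Real.sqrt (c ^ 2 * ∫ x in Ioi 0, ‖g x‖ ^ 2) := Real.sqrt_le_sqrt hint
    _ = c * L2norm g := by rw [Real.sqrt_mul (sq_nonneg c), Real.sqrt_sq hc, L2norm]

theorem sq_norm_le_of_abs_inner_deriv_le {v w : ℝ → ℂ} {c : ℝ} (hc : 0 ≤ c)
    (hderiv : ∀ y ∈ Ioi 0, HasDerivAt v (deriv v y) y)
    (hv : MemLp v 2 (volume.restrict (Ioi 0))) (hw : MemLp w 2 (volume.restrict (Ioi 0)))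
    (hvw : ∀ y ∈ Ioi 0, |⟪v y, deriv v y⟫_ℝ| ≤ c * (‖v y‖ * ‖w y‖)) :
    ∀ x ∈ Ioi 0, ‖v x‖ ^ 2 ≤ 2 * c * (L2norm v * L2norm w) := by
  intro x hx
  have hprod : IntegrableOn (fun y ↦ c * (‖v y‖ * ‖w y‖)) (Ioi 0) :=
    (hv.norm.integrable_mul hw.norm).const_mul c
  have hvw' : ∀ᵐ y ∂volume.restrict (Ioi 0), |⟪v y, deriv v y⟫_ℝ| ≤ c * (‖v y‖ * ‖w y‖) :=
    (ae_restrict_iff' measurableSet_Ioi).2 (.of_forall hvw)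
  have hinner : IntegrableOn (fun y ↦ ⟪v y, deriv v y⟫_ℝ) (Ioi 0) :=
    hprod.mono' (hv.1.inner (measurable_deriv v).aestronglyMeasurable) hvw'
  calc ‖v x‖ ^ 2 ≤ 2 * ∫ y in Ioi 0, |⟪v y, deriv v y⟫_ℝ| :=
        sq_norm_le_two_mul_integral_abs_inner hx hderiv
          ((memLp_two_iff_integrable_sq_norm hv.1).1 hv) hinner
    _ ≤ 2 * ∫ y in Ioi 0, c * (‖v y‖ * ‖w y‖) := mul_le_mul_of_nonneg_left
        (integral_mono_of_nonneg (.of_forall fun _ ↦ abs_nonneg _) hprod hvw') two_pos.le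
    _ ≤ 2 * c * (L2norm v * L2norm w) := by
        rw [integral_const_mul, mul_assoc]
        gcongr
        exact integral_norm_mul_norm_le_L2norm_mul hv hw

theorem abs_inner_deriv_le_inv_mul_norm_mul_norm_Jop {t : ℝ} (ht : 0 < t) (v : ℝ → ℂ) (x : ℝ) :
    |⟪v x, deriv v x⟫_ℝ| ≤ t⁻¹ * (‖v x‖ * ‖Jop t v x‖) := by
  -- `x ‖v x‖²` is real, so only the `i t v'` part of `J_t v` contributes.
  have key : t * ⟪v x, deriv v x⟫_ℝ = ⟪Complex.I * v x, Jop t v x⟫_ℝ := by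
    simp only [Complex.inner, Jop, map_mul, Complex.conj_I, Complex.mul_re, Complex.add_re,
      Complex.add_im, Complex.mul_im, Complex.conj_re, Complex.conj_im, Complex.I_re,
      Complex.I_im, Complex.ofReal_re, Complex.ofReal_im, Complex.neg_re, Complex.neg_im]
    ring
  rw [le_inv_mul_iff₀ ht]
  calc t * |⟪v x, deriv v x⟫_ℝ| = |⟪Complex.I * v x, Jop t v x⟫_ℝ| := by
        rw [← key, abs_mul, abs_of_pos ht]
    _ ≤ ‖v x‖ * ‖Jop t v x‖ := by
        simpa using abs_real_inner_le_norm (Complex.I * v x) (Jop t v x)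

theorem L2norm_deriv_power_le {p : ℝ} (hp : 1 ≤ p) {v : ℝ → ℂ} {B : ℝ}
    (hderiv : ∀ x ∈ Ioi 0, HasDerivAt v (deriv v x) x)
    (hv' : IntegrableOn (fun x ↦ ‖deriv v x‖ ^ 2) (Ioi 0))
    (hB : ∀ x ∈ Ioi 0, ‖v x‖ ^ 2 ≤ B) :
    L2norm (deriv fun x ↦ ((‖v x‖ ^ (p - 1) : ℝ) : ℂ) * v x) ≤
      p * B ^ ((p - 1) / 2) * L2norm (deriv v) := by
  have hB0 : 0 ≤ B := (sq_nonneg _).trans (hB 1 (mem_Ioi.2 one_pos))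
  refine L2norm_le_mul_of_norm_le (by positivity) hv' fun x hx ↦ ?_
  have hpow : ‖v x‖ ^ (p - 1) ≤ B ^ ((p - 1) / 2) :=
    calc ‖v x‖ ^ (p - 1) = (‖v x‖ ^ 2) ^ ((p - 1) / 2) := by
          rw [← Real.rpow_natCast, ← Real.rpow_mul (norm_nonneg _)]; ring_nf
      _ ≤ B ^ ((p - 1) / 2) := Real.rpow_le_rpow (sq_nonneg _) (hB x hx) (by linarith)
  simp_rw [← Complex.real_smul]
  calc _ ≤ p * ‖v x‖ ^ (p - 1) * ‖deriv v x‖ :=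
        norm_deriv_norm_rpow_smul_le hp (hderiv x hx).differentiableAt
    _ ≤ _ := by gcongr

/-- `L²` estimate of the derivative of the power nonlinearity `f = |v|^(p-1) v`. -/
theorem L2_bound_deriv_power_nonlinearity (p : ℝ) (hp : 1 ≤ p) :
    ∃ C > (0:ℝ), ∀ t : ℝ, 0 < t → ∀ v : ℝ → ℂ,
      ContDiffOn ℝ 2 v (Set.Ioi 0) →
      MeasureTheory.IntegrableOn (fun x => ‖v x‖ ^ 2) (Set.Ioi 0) →
      MeasureTheory.IntegrableOn (fun x => ‖deriv v x‖ ^ 2) (Set.Ioi 0) →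
      MeasureTheory.IntegrableOn (fun x => ‖Jop t v x‖ ^ 2) (Set.Ioi 0) →
      L2norm (deriv (fun x => ((‖v x‖ ^ (p - 1) : ℝ) : ℂ) * v x)) ≤
          C * t ^ (-(p - 1)/2) * L2norm (Jop t v) ^ ((p - 1)/2) *
            L2norm v ^ ((p - 1)/2) * L2norm (deriv v) ∧
      L2norm (deriv (fun x => ((‖v x‖ ^ (p - 1) : ℝ) : ℂ) * v x)) ≤
          C * L2norm (deriv v) ^ ((p - 1)/2) *
            L2norm v ^ ((p - 1)/2) * L2norm (deriv v) := by
  refine ⟨p * 2 ^ ((p - 1) / 2), by positivity, fun t ht v hv hv2 hv'2 hJ2 ↦ ?_⟩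
  have hderiv : ∀ x ∈ Ioi (0 : ℝ), HasDerivAt v (deriv v x) x := fun x hx ↦
    ((hv.contDiffAt (Ioi_mem_nhds hx)).differentiableAt (by norm_num)).hasDerivAt
  have hv_meas : AEStronglyMeasurable v (volume.restrict (Ioi 0)) :=
    hv.continuousOn.aestronglyMeasurable measurableSet_Ioi
  have hv'_meas : AEStronglyMeasurable (deriv v) (volume.restrict (Ioi 0)) :=
    (measurable_deriv v).aestronglyMeasurable
  have hv_mem := (memLp_two_iff_integrable_sq_norm hv_meas).2 hv2
  have hv'_mem := (memLp_two_iff_integrable_sq_norm hv'_meas).2 hv'2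
  have hJ_mem : MemLp (Jop t v) 2 (volume.restrict (Ioi 0)) := (memLp_two_iff_integrable_sq_norm
    ((Complex.continuous_ofReal.aestronglyMeasurable.mul hv_meas).add
      (aestronglyMeasurable_const.mul hv'_meas))).2 hJ2
  have hsupJ := sq_norm_le_of_abs_inner_deriv_le (inv_nonneg.2 ht.le) hderiv hv_mem hJ_mem
    fun y _ ↦ abs_inner_deriv_le_inv_mul_norm_mul_norm_Jop ht v y
  have hsupDeriv := sq_norm_le_of_abs_inner_deriv_le zero_le_one hderiv hv_mem hv'_mem
    fun y _ ↦ by simpa using abs_real_inner_le_norm (v y) (deriv v y)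
  have hL2 (φ ψ : ℝ → ℂ) : 0 ≤ L2norm φ * L2norm ψ := mul_nonneg (L2norm_nonneg φ) (L2norm_nonneg ψ)
  constructor
  · refine (L2norm_deriv_power_le hp hderiv hv'2 hsupJ).trans_eq ?_
    rw [neg_div, Real.rpow_neg ht.le, Real.mul_rpow (by positivity) (hL2 _ _),
      Real.mul_rpow zero_le_two (by positivity), Real.inv_rpow ht.le,
      Real.mul_rpow (L2norm_nonneg _) (L2norm_nonneg _)]
    ring
  · refine (L2norm_deriv_power_le hp hderiv hv'2 hsupDeriv).trans_eq ?_
    rw [mul_one, Real.mul_rpow zero_le_two (hL2 _ _),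
      Real.mul_rpow (L2norm_nonneg _) (L2norm_nonneg _)]
    ring
end

section
/- Boundary trace of the boundary potential: let h ∈ C¹([0,∞)) be bounded with bounded derivative. Then for every t > 0 the improper integral defining z_D(t,x) converges for each x > 0 and lim_{x→0⁺} z_D(t,x) = h(t). (This uses the Fresnel integral lim_{R→∞} ∫₀^R e^{i y²/2} dy = (1/2)√(2π) e^{iπ/4}.) -/
/-!
Split off `h t`: with `a = x / √t` and `k(y) = e^{iy²/2}`,
`∫_a^R k(y) h(t - x²/y²) dy = h t ∫_a^R k(y) dy + ∫_a^R k(y) (h(t - x²/y²) - h t) dy`.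
The first term converges by the Fresnel integral, and since `h` is Lipschitz the second integrand
is `O(x²/y²)`, hence absolutely integrable on `(a, ∞)` with integral `O(x²/a) = O(x)`. As `x → 0⁺`
the first term tends to `h t · (2πi)^{1/2} / 2` and the second to `0`.

The Fresnel integral itself is the case `re b = 0` of `∫₀^∞ e^{-by²} dy = (π/b)^{1/2} / 2`:
integration by parts bounds the tails `∫_R^{R'} e^{-by²} dy` by `1 / (|b| R)` uniformly on
`re b ≥ 0`, so the Gaussian integral for `re b > 0` passes to the limit `b + ε → b`.
-/

open MeasureTheory Set Filter

/-- The square root `(2πi)^{1/2} := √(2π) e^{iπ/4}`. -/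
noncomputable def sqrtTwoPiI : ℂ :=
  (Real.sqrt (2 * Real.pi) : ℂ) * Complex.exp ((Real.pi / 4 : ℂ) * Complex.I)

/-- `z` is the boundary potential built from `h`:
`z(t,x) = 2 (2πi)^{-1/2} lim_{R→∞} ∫_{x/√t}^R e^{i y²/2} h(t - x²/y²) dy`
(the improper-integral form of `(2πi)^{-1/2} ∫₀ᵗ e^{i x²/(2τ)} x τ^{-3/2} h(t-τ) dτ`). -/
def IsBoundaryPotential (h : ℝ → ℂ) (z : ℝ → ℝ → ℂ) : Prop :=
  ∀ t x : ℝ, 0 < t → 0 < x →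
    Filter.Tendsto
      (fun R : ℝ => (2 : ℂ) * sqrtTwoPiI⁻¹ *
        ∫ y in (x / Real.sqrt t)..R,
          Complex.exp (Complex.I * (y : ℂ) ^ 2 / 2) * h (t - x ^ 2 / y ^ 2))
      Filter.atTop (nhds (z t x))

open scoped Topology Real NNReal

lemma integral_inv_sq_of_pos {R₁ R₂ : ℝ} (h1 : 0 < R₁) (h12 : R₁ ≤ R₂) :
    ∫ y in R₁..R₂, (y ^ 2)⁻¹ = R₁⁻¹ - R₂⁻¹ := by
  have h0 : (0 : ℝ) ∉ uIcc R₁ R₂ := by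
    rw [uIcc_of_le h12]; exact fun h => h1.not_ge h.1
  have := integral_zpow (a := R₁) (b := R₂) (n := -2) (Or.inr ⟨by norm_num, h0⟩)
  simp only [zpow_neg] at this
  norm_num at this
  rw [this]; ring

lemma hasDerivAt_cexp_neg_mul_sq (b : ℂ) (y : ℝ) :
    HasDerivAt (fun y : ℝ => Complex.exp (-b * (y : ℂ) ^ 2))
      (-2 * b * y * Complex.exp (-b * (y : ℂ) ^ 2)) y := by
  have := (((hasDerivAt_id' (y : ℂ)).fun_pow 2).const_mul (-b)).cexp
  convert this.comp_ofReal using 1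
  simp only [Nat.cast_ofNat]
  ring

lemma norm_cexp_neg_mul_sq_le_one {b : ℂ} (hb : 0 ≤ b.re) (y : ℝ) :
    ‖Complex.exp (-b * (y : ℂ) ^ 2)‖ ≤ 1 := by
  rw [norm_cexp_neg_mul_sq, Real.exp_le_one_iff]
  nlinarith [sq_nonneg y]

lemma norm_intervalIntegral_cexp_neg_mul_sq_le {b : ℂ} (hb : 0 ≤ b.re) (hb0 : b ≠ 0)
    {R₁ R₂ : ℝ} (hR₁ : 0 < R₁) (h12 : R₁ ≤ R₂) :
    ‖∫ y in R₁..R₂, Complex.exp (-b * (y : ℂ) ^ 2)‖ ≤ (‖b‖ * R₁)⁻¹ := by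
  set e : ℝ → ℂ := fun y => Complex.exp (-b * (y : ℂ) ^ 2)
  have hR : ∀ y ∈ uIcc R₁ R₂, 0 < y := fun y hy => hR₁.trans_le (uIcc_of_le h12 ▸ hy).1
  have hne : ∀ y ∈ uIcc R₁ R₂, (y : ℂ) ≠ 0 := fun y hy => by exact_mod_cast (hR y hy).ne'
  have hcont : ContinuousOn (fun y : ℝ => (2 * b * (y : ℂ) ^ 2)⁻¹) (uIcc R₁ R₂) :=
    ContinuousOn.inv₀ (by fun_prop) fun y hy => by simp [hb0, hne y hy]
  -- `e = u · e'` with `u y = -(2by)⁻¹`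
  have hibp : ∫ y in R₁..R₂, e y = -(2 * b * R₂)⁻¹ * e R₂ - -(2 * b * R₁)⁻¹ * e R₁
      - ∫ y in R₁..R₂, (2 * b * (y : ℂ) ^ 2)⁻¹ * e y := by
    rw [← intervalIntegral.integral_mul_deriv_eq_deriv_mul
      (u := fun y : ℝ => -(2 * b * y)⁻¹) (v' := fun y : ℝ => -2 * b * y * e y)]
    · exact intervalIntegral.integral_congr fun y hy => by field_simp [hne y hy]
    · intro y hy
      have := (((hasDerivAt_id' (y : ℂ)).const_mul (2 * b)).fun_inv
        (mul_ne_zero (mul_ne_zero two_ne_zero hb0) (hne y hy))).fun_neg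
      exact this.comp_ofReal.congr_deriv (by field_simp)
    · exact fun y _ => hasDerivAt_cexp_neg_mul_sq b y
    · exact hcont.intervalIntegrable
    · exact (by fun_prop : Continuous fun y : ℝ => -2 * b * y * e y).intervalIntegrable _ _
  have hb' : 0 < ‖b‖ := norm_pos_iff.mpr hb0
  have hboundary : ∀ y : ℝ, 0 < y → ‖-(2 * b * y)⁻¹ * e y‖ ≤ (2 * ‖b‖ * y)⁻¹ := fun y hy => by
    rw [norm_mul, norm_neg, norm_inv, norm_mul, norm_mul, Complex.norm_real, Complex.norm_two,
      Real.norm_of_nonneg hy.le]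
    exact mul_le_of_le_one_right (by positivity) (norm_cexp_neg_mul_sq_le_one hb y)
  have hremainder : ‖∫ y in R₁..R₂, (2 * b * (y : ℂ) ^ 2)⁻¹ * e y‖
      ≤ (2 * ‖b‖)⁻¹ * (R₁⁻¹ - R₂⁻¹) := by
    rw [← integral_inv_sq_of_pos hR₁ h12, ← intervalIntegral.integral_const_mul]
    refine intervalIntegral.norm_integral_le_of_norm_le h12 (ae_of_all _ fun y hy => ?_) ?_
    · have hy : 0 < y := hR₁.trans hy.1
      rw [norm_mul, norm_inv, norm_mul, norm_mul, norm_pow, Complex.norm_real, Complex.norm_two,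
        Real.norm_of_nonneg hy.le, mul_inv, mul_inv]
      exact mul_le_of_le_one_right (by positivity) (norm_cexp_neg_mul_sq_le_one hb y)
    · refine ContinuousOn.intervalIntegrable (ContinuousOn.mul continuousOn_const ?_)
      exact ContinuousOn.inv₀ (by fun_prop) fun y hy => (pow_pos (hR y hy) 2).ne'
  have hR₂ : 0 < R₂ := hR₁.trans_le h12
  calc ‖∫ y in R₁..R₂, e y‖
      ≤ (2 * ‖b‖ * R₂)⁻¹ + (2 * ‖b‖ * R₁)⁻¹ + (2 * ‖b‖)⁻¹ * (R₁⁻¹ - R₂⁻¹) := by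
        rw [hibp]
        exact (norm_sub_le _ _).trans (add_le_add ((norm_sub_le _ _).trans
          (add_le_add (hboundary R₂ hR₂) (hboundary R₁ hR₁))) hremainder)
    _ = (‖b‖ * R₁)⁻¹ := by field_simp; ring

lemma norm_integral_Ioi_cexp_neg_mul_sq_le {b : ℂ} (hb : 0 < b.re) {R : ℝ} (hR : 0 < R) :
    ‖∫ y in Ioi R, Complex.exp (-b * (y : ℂ) ^ 2)‖ ≤ (‖b‖ * R)⁻¹ := by
  refine le_of_tendsto (intervalIntegral_tendsto_integral_Ioi R
    (integrable_cexp_neg_mul_sq hb).integrableOn tendsto_id).norm ?_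
  filter_upwards [eventually_ge_atTop R] with R' hR'
  exact norm_intervalIntegral_cexp_neg_mul_sq_le hb.le (Complex.ne_zero_of_re_pos hb) hR hR'

lemma integral_interval_add_Ioi_cexp_neg_mul_sq {b : ℂ} (hb : 0 < b.re) (R : ℝ) :
    (∫ y in (0 : ℝ)..R, Complex.exp (-b * (y : ℂ) ^ 2))
      + ∫ y in Ioi R, Complex.exp (-b * (y : ℂ) ^ 2) = (π / b) ^ (1 / 2 : ℂ) / 2 := by
  rw [← integral_gaussian_complex_Ioi hb]
  exact intervalIntegral.integral_interval_add_Ioi (integrable_cexp_neg_mul_sq hb).integrableOn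
    (integrable_cexp_neg_mul_sq hb).integrableOn

lemma continuousAt_pi_div_cpow_half {b : ℂ} (hb : 0 ≤ b.re) (hb0 : b ≠ 0) :
    ContinuousAt (fun c : ℂ => (π / c) ^ (1 / 2 : ℂ)) b := by
  have hre : 0 ≤ (π / b).re := by
    rw [div_eq_mul_inv, Complex.re_ofReal_mul, Complex.inv_re]
    exact mul_nonneg Real.pi_pos.le (div_nonneg hb (Complex.normSq_nonneg b))
  exact (Complex.continuousAt_cpow_const_of_re_pos (Or.inl hre) (by norm_num)).comp
    (continuousAt_const.div continuousAt_id hb0)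

theorem tendsto_intervalIntegral_cexp_neg_mul_sq {b : ℂ} (hb : 0 ≤ b.re) (hb0 : b ≠ 0) :
    Tendsto (fun R : ℝ => ∫ y in (0 : ℝ)..R, Complex.exp (-b * (y : ℂ) ^ 2)) atTop
      (𝓝 ((π / b) ^ (1 / 2 : ℂ) / 2)) := by
  set L : ℂ → ℂ := fun c => (π / c) ^ (1 / 2 : ℂ) / 2
  set F : ℂ → ℝ → ℂ := fun c R => ∫ y in (0 : ℝ)..R, Complex.exp (-c * (y : ℂ) ^ 2)
  have hdist : ∀ R : ℝ, 0 < R → ‖F b R - L b‖ ≤ (‖b‖ * R)⁻¹ := by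
    intro R hR
    have hcont : ContinuousAt (fun ε : ℝ => F (b + ε) R - L (b + ε)) 0 := by
      refine ContinuousAt.sub ?_ ?_
      · exact (intervalIntegral.continuous_parametric_intervalIntegral_of_continuous'
          (by fun_prop) 0 R).continuousAt
      have hL : ContinuousAt L (b + (0 : ℝ)) := by
        simpa only [Complex.ofReal_zero, add_zero] using
          (continuousAt_pi_div_cpow_half hb hb0).div_const 2
      exact hL.comp (f := fun ε : ℝ => b + ε) (by fun_prop)
    have hlim : Tendsto (fun ε : ℝ => ‖F (b + ε) R - L (b + ε)‖) (𝓝[>] 0)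
        (𝓝 ‖F b R - L b‖) := by
      simpa using hcont.tendsto.norm.mono_left nhdsWithin_le_nhds
    refine le_of_tendsto hlim ?_
    filter_upwards [self_mem_nhdsWithin] with ε (hε : 0 < ε)
    have hre : 0 < (b + ε).re := by simp; linarith
    have hnorm : ‖b‖ ≤ ‖b + ε‖ := by
      rw [← sq_le_sq₀ (norm_nonneg _) (norm_nonneg _), Complex.sq_norm, Complex.sq_norm,
        Complex.normSq_apply, Complex.normSq_apply]
      simp only [Complex.add_re, Complex.ofReal_re, Complex.add_im, Complex.ofReal_im, add_zero]
      nlinarith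
    simp only [F, L]
    rw [← integral_interval_add_Ioi_cexp_neg_mul_sq hre R, sub_add_cancel_left, norm_neg]
    exact (norm_integral_Ioi_cexp_neg_mul_sq_le hre hR).trans
      (inv_anti₀ (by positivity) (by gcongr))
  rw [tendsto_iff_norm_sub_tendsto_zero]
  refine squeeze_zero' (Eventually.of_forall fun _ => norm_nonneg _)
    ((eventually_gt_atTop 0).mono hdist) ?_
  exact tendsto_inv_atTop_zero.comp (tendsto_id.const_mul_atTop (norm_pos_iff.mpr hb0))

lemma sqrtTwoPiI_sq : sqrtTwoPiI ^ 2 = 2 * π * Complex.I := by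
  rw [sqrtTwoPiI, mul_pow, ← Complex.ofReal_pow, Real.sq_sqrt (by positivity),
    ← Complex.exp_nat_mul, show ((2 : ℕ) : ℂ) * (π / 4 * Complex.I) = π / 2 * Complex.I by ring,
    Complex.exp_pi_div_two_mul_I]
  push_cast
  ring

lemma sqrtTwoPiI_re_pos : 0 < sqrtTwoPiI.re := by
  rw [sqrtTwoPiI, Complex.re_ofReal_mul, ← Complex.ofReal_ofNat, ← Complex.ofReal_div,
    Complex.exp_ofReal_mul_I_re]
  exact mul_pos (by positivity)
    (Real.cos_pos_of_mem_Ioo ⟨by linarith [Real.pi_pos], by linarith [Real.pi_pos]⟩)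

lemma two_pi_I_cpow_half : (2 * π * Complex.I) ^ (1 / 2 : ℂ) = sqrtTwoPiI := by
  rw [← sqrtTwoPiI_sq, one_div, Complex.sq_cpow_two_inv sqrtTwoPiI_re_pos]

theorem tendsto_intervalIntegral_fresnel :
    Tendsto (fun R : ℝ => ∫ y in (0 : ℝ)..R, Complex.exp (Complex.I * (y : ℂ) ^ 2 / 2)) atTop
      (𝓝 (sqrtTwoPiI / 2)) := by
  have h := tendsto_intervalIntegral_cexp_neg_mul_sq (b := -Complex.I / 2) (by simp) (by simp)
  rw [show (π : ℂ) / (-Complex.I / 2) = 2 * π * Complex.I by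
    field_simp; rw [Complex.I_sq], two_pi_I_cpow_half] at h
  refine h.congr fun R => intervalIntegral.integral_congr fun y _ => ?_
  ring_nf

lemma continuous_cexp_I_mul_sq_div_two :
    Continuous fun y : ℝ => Complex.exp (Complex.I * (y : ℂ) ^ 2 / 2) := by fun_prop

lemma norm_cexp_I_mul_sq_div_two (y : ℝ) : ‖Complex.exp (Complex.I * (y : ℂ) ^ 2 / 2)‖ = 1 := by
  rw [Complex.norm_exp]; simp [← Complex.ofReal_pow]

section KernelIntegral

variable {k g : ℝ → ℂ} {c : ℂ} {a C : ℝ}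

lemma norm_mul_sub_le_mul_rpow (hk : ∀ y, ‖k y‖ ≤ 1) (ha : 0 < a)
    (hg : ∀ y > a, ‖g y - c‖ ≤ C / y ^ 2) :
    ∀ y ∈ Ioi a, ‖k y * (g y - c)‖ ≤ C * y ^ (-2 : ℝ) := fun y hy => by
  have hy : 0 < y := ha.trans hy
  rw [Real.rpow_neg hy.le, Real.rpow_two, ← div_eq_mul_inv, norm_mul]
  exact (mul_le_of_le_one_left (norm_nonneg _) (hk y)).trans (hg y ‹_›)

lemma integrableOn_Ioi_mul_sub (hkc : Continuous k) (hk : ∀ y, ‖k y‖ ≤ 1) (ha : 0 < a)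
    (hgc : ContinuousOn g (Ici a)) (hg : ∀ y > a, ‖g y - c‖ ≤ C / y ^ 2) :
    IntegrableOn (fun y => k y * (g y - c)) (Ioi a) := by
  refine Integrable.mono' ((integrableOn_Ioi_rpow_of_lt (by norm_num) ha).const_mul C) ?_
    ((ae_restrict_iff' measurableSet_Ioi).mpr (Eventually.of_forall
      (norm_mul_sub_le_mul_rpow hk ha hg)))
  exact ((hkc.continuousOn.mul (hgc.sub continuousOn_const)).mono Ioi_subset_Ici_self)
    |>.aestronglyMeasurable measurableSet_Ioi

lemma norm_integral_Ioi_mul_sub_le (hk : ∀ y, ‖k y‖ ≤ 1) (ha : 0 < a)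
    (hg : ∀ y > a, ‖g y - c‖ ≤ C / y ^ 2) :
    ‖∫ y in Ioi a, k y * (g y - c)‖ ≤ C / a := by
  refine (norm_integral_le_of_norm_le ((integrableOn_Ioi_rpow_of_lt (by norm_num) ha).const_mul C)
    ((ae_restrict_iff' measurableSet_Ioi).mpr (Eventually.of_forall
      (norm_mul_sub_le_mul_rpow hk ha hg)))).trans_eq ?_
  rw [integral_const_mul, integral_Ioi_rpow_of_lt (by norm_num) ha]
  norm_num [Real.rpow_neg_one, div_eq_mul_inv]

lemma tendsto_intervalIntegral_mul {L : ℂ} (hkc : Continuous k) (hk : ∀ y, ‖k y‖ ≤ 1)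
    (hkL : Tendsto (fun R => ∫ y in (0 : ℝ)..R, k y) atTop (𝓝 L)) (ha : 0 < a)
    (hgc : ContinuousOn g (Ici a)) (hg : ∀ y > a, ‖g y - c‖ ≤ C / y ^ 2) :
    Tendsto (fun R => ∫ y in a..R, k y * g y) atTop
      (𝓝 (c * (L - ∫ y in (0 : ℝ)..a, k y) + ∫ y in Ioi a, k y * (g y - c))) := by
  have hrem := intervalIntegral_tendsto_integral_Ioi a
    (integrableOn_Ioi_mul_sub hkc hk ha hgc hg) tendsto_id
  refine (((hkL.sub_const _).const_mul c).add hrem).congr' ?_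
  filter_upwards [eventually_ge_atTop a] with R hR
  have hki : ∀ u v : ℝ, IntervalIntegrable k volume u v := fun u v => hkc.intervalIntegrable u v
  have hgc' : ContinuousOn g (uIcc a R) := hgc.mono (uIcc_of_le hR ▸ Icc_subset_Ici_self)
  rw [intervalIntegral.integral_interval_sub_left (hki 0 R) (hki 0 a), id,
    ← intervalIntegral.integral_const_mul, ← intervalIntegral.integral_add]
  · exact intervalIntegral.integral_congr fun y _ => by ring
  · exact (hki a R).const_mul c
  · exact (hkc.continuousOn.mul (hgc'.sub continuousOn_const)).intervalIntegrable

end KernelIntegral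

section BoundaryPotential

variable {t x y : ℝ}

lemma sq_div_sq_lt_of_div_sqrt_lt (ht : 0 < t) (hx : 0 ≤ x) (hy : x / √t < y) :
    x ^ 2 / y ^ 2 < t := by
  have hst : 0 < √t := Real.sqrt_pos.mpr ht
  have hy0 : 0 < y := (div_nonneg hx hst.le).trans_lt hy
  rw [div_lt_iff₀ hst, mul_comm] at hy
  rw [div_lt_iff₀ (by positivity), ← Real.sq_sqrt ht.le, ← mul_pow]
  exact pow_lt_pow_left₀ hy hx two_ne_zero

lemma sq_div_sq_le_of_div_sqrt_le (ht : 0 < t) (hx : 0 < x) (hy : x / √t ≤ y) :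
    x ^ 2 / y ^ 2 ≤ t := by
  have hst : 0 < √t := Real.sqrt_pos.mpr ht
  have hy0 : 0 < y := (div_pos hx hst).trans_le hy
  rw [div_le_iff₀ hst, mul_comm] at hy
  rw [div_le_iff₀ (by positivity), ← Real.sq_sqrt ht.le, ← mul_pow]
  exact pow_le_pow_left₀ hx.le hy 2

variable {h : ℝ → ℂ}

lemma continuousOn_comp_sub_sq_div_sq (hh : ContinuousOn h (Ici 0)) (ht : 0 < t) (hx : 0 < x) :
    ContinuousOn (fun y => h (t - x ^ 2 / y ^ 2)) (Ici (x / √t)) := by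
  have hpos : ∀ y ∈ Ici (x / √t), 0 < y := fun y hy =>
    (div_pos hx (Real.sqrt_pos.mpr ht)).trans_le hy
  refine hh.comp (continuousOn_const.sub (continuousOn_const.div (continuousOn_pow 2)
    fun y hy => (pow_pos (hpos y hy) 2).ne')) fun y hy => ?_
  exact sub_nonneg.mpr (sq_div_sq_le_of_div_sqrt_le ht hx hy)

lemma norm_comp_sub_sq_div_sq_sub_le {K : ℝ≥0} (hh : LipschitzOnWith K h (Ioi 0)) (ht : 0 < t)
    (hx : 0 ≤ x) (hy : x / √t < y) : ‖h (t - x ^ 2 / y ^ 2) - h t‖ ≤ K * x ^ 2 / y ^ 2 := by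
  have hpos : t - x ^ 2 / y ^ 2 ∈ Ioi 0 := sub_pos.mpr (sq_div_sq_lt_of_div_sqrt_lt ht hx hy)
  refine (hh.norm_sub_le hpos ht).trans_eq ?_
  rw [sub_sub_cancel_left, norm_neg, Real.norm_of_nonneg (by positivity), mul_div_assoc]

lemma lipschitzOnWith_Ioi_of_contDiffOn {M : ℝ} (hh : ContDiffOn ℝ 1 h (Ici 0))
    (hM : ∀ t > 0, ‖deriv h t‖ ≤ M) : LipschitzOnWith M.toNNReal h (Ioi 0) :=
  (convex_Ioi 0).lipschitzOnWith_of_nnnorm_deriv_le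
    (fun t ht => (hh.differentiableOn one_ne_zero t (mem_Ici.mpr (le_of_lt ht))).differentiableAt
      (Ici_mem_nhds ht))
    fun t ht => NNReal.le_toNNReal_of_coe_le (hM t ht)

/-- The limit in `IsBoundaryPotential`, with `h t` split off the improper integral so that what
remains converges absolutely. -/
noncomputable def boundaryPotential (h : ℝ → ℂ) (t x : ℝ) : ℂ :=
  2 * sqrtTwoPiI⁻¹ *
    (h t * (sqrtTwoPiI / 2 - ∫ y in (0 : ℝ)..x / √t, Complex.exp (Complex.I * (y : ℂ) ^ 2 / 2))
      + ∫ y in Ioi (x / √t),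
          Complex.exp (Complex.I * (y : ℂ) ^ 2 / 2) * (h (t - x ^ 2 / y ^ 2) - h t))

variable {K : ℝ≥0}

lemma isBoundaryPotential_boundaryPotential (hc : ContinuousOn h (Ici 0))
    (hl : LipschitzOnWith K h (Ioi 0)) : IsBoundaryPotential h (boundaryPotential h) :=
  fun _ _ ht hx => (tendsto_intervalIntegral_mul continuous_cexp_I_mul_sq_div_two
    (fun y => (norm_cexp_I_mul_sq_div_two y).le) tendsto_intervalIntegral_fresnel
    (div_pos hx (Real.sqrt_pos.mpr ht)) (continuousOn_comp_sub_sq_div_sq hc ht hx)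
    fun _ hy => norm_comp_sub_sq_div_sq_sub_le hl ht hx.le hy).const_mul _

lemma tendsto_boundaryPotential (hl : LipschitzOnWith K h (Ioi 0)) (ht : 0 < t) :
    Tendsto (boundaryPotential h t) (𝓝[>] 0) (𝓝 (h t)) := by
  have hst : 0 < √t := Real.sqrt_pos.mpr ht
  have hhead : Tendsto (fun x => ∫ y in (0 : ℝ)..x / √t, Complex.exp (Complex.I * (y : ℂ) ^ 2 / 2))
      (𝓝[>] 0) (𝓝 0) := by
    have := ((intervalIntegral.continuous_primitive (μ := volume)
      (fun _ _ => continuous_cexp_I_mul_sq_div_two.intervalIntegrable _ _) 0).comp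
      (continuous_id.div_const √t)).tendsto 0
    simpa [Function.comp_def] using this.mono_left nhdsWithin_le_nhds
  have htail : Tendsto (fun x => ∫ y in Ioi (x / √t),
        Complex.exp (Complex.I * (y : ℂ) ^ 2 / 2) * (h (t - x ^ 2 / y ^ 2) - h t))
      (𝓝[>] 0) (𝓝 0) := by
    have hbound : Tendsto (fun x : ℝ => K * √t * x) (𝓝[>] 0) (𝓝 0) :=
      tendsto_nhdsWithin_of_tendsto_nhds
        (by simpa using (continuous_const_mul (K * √t : ℝ)).tendsto 0)
    refine squeeze_zero_norm' ?_ hbound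
    filter_upwards [self_mem_nhdsWithin] with x (hx : 0 < x)
    refine (norm_integral_Ioi_mul_sub_le (fun y => (norm_cexp_I_mul_sq_div_two y).le)
      (div_pos hx hst) fun _ hy => norm_comp_sub_sq_div_sq_sub_le hl ht hx.le hy).trans_eq ?_
    field_simp
  have hS : sqrtTwoPiI ≠ 0 := fun h0 => by simpa [h0] using sqrtTwoPiI_re_pos
  have hlim := ((hhead.const_sub (sqrtTwoPiI / 2)).const_mul (h t) |>.add htail).const_mul
    (2 * sqrtTwoPiI⁻¹)
  rwa [show 2 * sqrtTwoPiI⁻¹ * (h t * (sqrtTwoPiI / 2 - 0) + 0) = h t by field_simp; ring] at hlim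

end BoundaryPotential

/-- Boundary trace of the boundary potential: the improper integral defining
`z_D(t,x)` converges for every `t > 0`, `x > 0`, and `z_D(t,x) → h(t)` as
`x → 0⁺`. -/
theorem boundary_potential_trace
    (h : ℝ → ℂ) (hreg : ContDiffOn ℝ 1 h (Set.Ici 0))
    (hbdd : ∃ M : ℝ, ∀ t : ℝ, 0 ≤ t → ‖h t‖ ≤ M ∧ ‖deriv h t‖ ≤ M) :
    ∃ z : ℝ → ℝ → ℂ, IsBoundaryPotential h z ∧
      ∀ t : ℝ, 0 < t →
        Filter.Tendsto (fun x => z t x) (nhdsWithin 0 (Set.Ioi 0)) (nhds (h t)) := by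
  obtain ⟨M, hM⟩ := hbdd
  have hl := lipschitzOnWith_Ioi_of_contDiffOn hreg fun t ht => (hM t ht.le).2
  exact ⟨boundaryPotential h, isBoundaryPotential_boundaryPotential hreg.continuousOn hl,
    fun t ht => tendsto_boundaryPotential hl ht⟩
end

section
/- Tail estimate for the oscillatory boundary integral: there is an absolute constant C > 0 such that for every ξ ∈ ℝ, every t > 0, and every h ∈ C¹([0,∞)) with h(τ) → 0 as τ → ∞ and with ∫_t^∞ |h(τ)| τ^{−1/2} dτ < ∞ and ∫_t^∞ τ^{1/2} |h'(τ)| dτ < ∞, the improper integral ∫_t^∞ i ξ e^{−i ξ² τ/2} h(τ) dτ converges and satisfies | ∫_t^∞ i ξ e^{−i ξ² τ/2} h(τ) dτ | ≤ C ( √t |h(t)| + ∫_t^∞ |h(τ)| τ^{−1/2} dτ + ∫_t^∞ τ^{1/2} |h'(τ)| dτ ). -/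
open MeasureTheory Set Filter
open scoped Topology

/-!
Split the integral at `s = max t ξ⁻²`. On `[t, s]` one has `|ξ| ≤ τ^{-1/2}`, so the integrand
is dominated by `|h(τ)| τ^{-1/2}`. On `[s, ∞)` integrate by parts against the primitive
`-(2/ξ) e^{-iξ²τ/2}` of the oscillating factor, whose modulus `2/|ξ|` is at most `2√τ` there.
The boundary term at `s` is `√s |h(s)|` up to a factor `2`, and `√s h(s) = √t h(t) + ∫_t^s (√τ h)'`.
-/

theorem intervalIntegral_le_setIntegral_Ioi {φ : ℝ → ℝ} {a b : ℝ} (hab : a ≤ b)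
    (hφ : IntegrableOn φ (Ioi a)) (hφ0 : ∀ x, 0 ≤ φ x) :
    ∫ x in a..b, φ x ≤ ∫ x in Ioi a, φ x := by
  rw [intervalIntegral.integral_of_le hab]
  exact setIntegral_mono_set hφ (ae_of_all _ fun x => hφ0 x) Ioc_subset_Ioi_self.eventuallyLE

theorem sqrt_mul_norm_le_add_integral {E : Type*} [NormedAddCommGroup E] [NormedSpace ℝ E]
    [CompleteSpace E] {h h' : ℝ → E} {a b : ℝ} (ha : 0 < a) (hab : a ≤ b)
    (hd : ∀ x ∈ Icc a b, HasDerivAt h (h' x) x) (hc : ContinuousOn h' (Icc a b)) :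
    √b * ‖h b‖ ≤ √a * ‖h a‖ + (∫ x in a..b, ‖h x‖ / √x) + ∫ x in a..b, √x * ‖h' x‖ := by
  have hpos : ∀ x ∈ Icc a b, 0 < x := fun x hx => ha.trans_le hx.1
  have hsqrt : ∀ x ∈ Icc a b, HasDerivAt (fun x => √x) (1 / (2 * √x)) x :=
    fun x hx => Real.hasDerivAt_sqrt (hpos x hx).ne'
  have hhc : ContinuousOn h (Icc a b) := fun x hx => (hd x hx).continuousAt.continuousWithinAt
  have hsqrtc : ContinuousOn (fun x => √x) (Icc a b) := Real.continuous_sqrt.continuousOn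
  have hsqrt0 : ∀ x ∈ Icc a b, √x ≠ 0 := fun x hx => (Real.sqrt_pos.2 (hpos x hx)).ne'
  set g' : ℝ → E := fun x => √x • h' x + (1 / (2 * √x)) • h x
  have hg : ∀ x ∈ uIcc a b, HasDerivAt (fun x => √x • h x) (g' x) x := by
    rw [uIcc_of_le hab]
    exact fun x hx => (hsqrt x hx).smul (hd x hx)
  have hg'c : ContinuousOn g' (Icc a b) :=
    (hsqrtc.smul hc).add ((continuousOn_const.div (continuousOn_const.mul hsqrtc)
      fun x hx => mul_ne_zero two_ne_zero (hsqrt0 x hx)).smul hhc)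
  have hI₁ : IntervalIntegrable (fun x => ‖h x‖ / √x) volume a b :=
    (hhc.norm.div hsqrtc hsqrt0).intervalIntegrable_of_Icc hab
  have hI₂ : IntervalIntegrable (fun x => √x * ‖h' x‖) volume a b :=
    (hsqrtc.mul hc.norm).intervalIntegrable_of_Icc hab
  have hg'le : ∀ x ∈ Ioc a b, ‖g' x‖ ≤ ‖h x‖ / √x + √x * ‖h' x‖ := by
    intro x hx
    have hx0 : 0 < √x := Real.sqrt_pos.2 (ha.trans hx.1)
    calc ‖g' x‖ ≤ √x * ‖h' x‖ + 1 / (2 * √x) * ‖h x‖ := by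
          refine (norm_add_le _ _).trans_eq ?_
          rw [norm_smul, norm_smul, Real.norm_of_nonneg hx0.le,
            Real.norm_of_nonneg (by positivity)]
      _ ≤ ‖h x‖ / √x + √x * ‖h' x‖ := by
          rw [add_comm, one_div_mul_eq_div]
          gcongr
          linarith
  have hftc : √b • h b = √a • h a + ∫ x in a..b, g' x := by
    rw [intervalIntegral.integral_eq_sub_of_hasDerivAt hg (hg'c.intervalIntegrable_of_Icc hab)]
    abel
  calc √b * ‖h b‖ = ‖√b • h b‖ := by rw [norm_smul, Real.norm_of_nonneg (Real.sqrt_nonneg _)]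
    _ ≤ ‖√a • h a‖ + ‖∫ x in a..b, g' x‖ := hftc ▸ norm_add_le _ _
    _ ≤ √a * ‖h a‖ + ∫ x in a..b, (‖h x‖ / √x + √x * ‖h' x‖) := by
        rw [norm_smul, Real.norm_of_nonneg (Real.sqrt_nonneg _)]
        gcongr
        exact intervalIntegral.norm_integral_le_of_norm_le hab (ae_of_all _ hg'le) (hI₁.add hI₂)
    _ = _ := by rw [intervalIntegral.integral_add hI₁ hI₂, add_assoc]

theorem tendsto_integral_mul_deriv_atTop {A : Type*} [NormedRing A] [NormedAlgebra ℝ A]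
    [CompleteSpace A] {u v u' v' : ℝ → A} {a : ℝ}
    (hu : ∀ x ∈ Ici a, HasDerivAt u (u' x) x) (hv : ∀ x ∈ Ici a, HasDerivAt v (v' x) x)
    (hu' : ContinuousOn u' (Ici a)) (hv' : ContinuousOn v' (Ici a))
    (huv : Tendsto (u * v) atTop (𝓝 0)) (hu'v : IntegrableOn (u' * v) (Ioi a)) :
    Tendsto (fun b => ∫ x in a..b, u x * v' x) atTop
      (𝓝 (-(u a * v a) - ∫ x in Ioi a, u' x * v x)) := by
  have hlim := (huv.sub_const (u a * v a)).sub
    (intervalIntegral_tendsto_integral_Ioi a hu'v tendsto_id)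
  rw [zero_sub] at hlim
  refine hlim.congr' ?_
  filter_upwards [eventually_ge_atTop a] with b hb
  have hsub : uIcc a b ⊆ Ici a := by rw [uIcc_of_le hb]; exact Icc_subset_Ici_self
  exact (intervalIntegral.integral_mul_deriv_eq_deriv_mul (fun x hx => hu x (hsub hx))
    (fun x hx => hv x (hsub hx)) ((hu'.mono hsub).intervalIntegrable)
    ((hv'.mono hsub).intervalIntegrable)).symm

theorem ContDiffOn.hasDerivAt_deriv_Ici_of_lt {E : Type*} [NormedAddCommGroup E]
    [NormedSpace ℝ E] {h : ℝ → E} {a t : ℝ} (hh : ContDiffOn ℝ 1 h (Ici a)) (ht : a < t) :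
    (∀ x ∈ Ici t, HasDerivAt h (deriv h x) x) ∧ ContinuousOn (deriv h) (Ici t) := by
  have hsub : Ici t ⊆ Ioi a := fun x hx => ht.trans_le hx
  refine ⟨fun x hx => ((hh.differentiableOn one_ne_zero).differentiableAt
    (Ici_mem_nhds (hsub hx))).hasDerivAt, ?_⟩
  exact ((hh.mono Ioi_subset_Ici_self).continuousOn_deriv_of_isOpen isOpen_Ioi le_rfl).mono hsub

noncomputable def phase (ξ τ : ℝ) : ℂ := Complex.exp (-Complex.I * (ξ : ℂ) ^ 2 * (τ : ℂ) / 2)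

theorem norm_phase (ξ τ : ℝ) : ‖phase ξ τ‖ = 1 := by
  have : -Complex.I * (ξ : ℂ) ^ 2 * (τ : ℂ) / 2 = ((-(ξ ^ 2 * τ / 2) : ℝ) : ℂ) * Complex.I := by
    push_cast; ring
  rw [phase, this, Complex.norm_exp_ofReal_mul_I]

theorem continuous_phase (ξ : ℝ) : Continuous (phase ξ) := by
  unfold phase; fun_prop

-- At `ξ = 0` both sides vanish (`-2 / 0 = 0`), so no case split on `ξ` is needed.
theorem hasDerivAt_phase_primitive (ξ τ : ℝ) :
    HasDerivAt (fun τ => -2 / (ξ : ℂ) * phase ξ τ) (Complex.I * ξ * phase ξ τ) τ := by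
  have hlin : HasDerivAt (fun τ : ℝ => -Complex.I * (ξ : ℂ) ^ 2 * (τ : ℂ) / 2)
      (-Complex.I * (ξ : ℂ) ^ 2 / 2) τ :=
    ((Complex.ofRealCLM.hasDerivAt (x := τ)).const_mul
      (-Complex.I * (ξ : ℂ) ^ 2)).div_const 2 |>.congr_deriv (by simp)
  refine (hlin.cexp.const_mul (-2 / (ξ : ℂ))).congr_deriv ?_
  rcases eq_or_ne (ξ : ℂ) 0 with hξ | hξ
  · simp [hξ]
  · unfold phase; field_simp

theorem norm_phase_primitive (ξ τ : ℝ) : ‖-2 / (ξ : ℂ) * phase ξ τ‖ = 2 * |ξ|⁻¹ := by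
  simp [norm_phase, div_eq_mul_inv]

theorem abs_mul_sqrt_le_one {ξ τ : ℝ} (hτ : τ ≤ (ξ ^ 2)⁻¹) : |ξ| * √τ ≤ 1 := by
  calc |ξ| * √τ ≤ |ξ| * √((ξ ^ 2)⁻¹) := by gcongr
    _ = |ξ| * |ξ|⁻¹ := by rw [Real.sqrt_inv, Real.sqrt_sq_eq_abs]
    _ ≤ 1 := mul_inv_le_one

theorem inv_abs_le_sqrt {ξ τ : ℝ} (hτ : (ξ ^ 2)⁻¹ ≤ τ) : |ξ|⁻¹ ≤ √τ := by
  calc |ξ|⁻¹ = √((ξ ^ 2)⁻¹) := by rw [Real.sqrt_inv, Real.sqrt_sq_eq_abs]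
    _ ≤ √τ := Real.sqrt_le_sqrt hτ

theorem norm_integral_phase_le_of_le_max {ξ t s : ℝ} {h : ℝ → ℂ} (ht : 0 < t) (hts : t ≤ s)
    (hs : s ≤ max t (ξ ^ 2)⁻¹) (hh : ContinuousOn h (Icc t s)) :
    ‖∫ τ in t..s, Complex.I * ξ * phase ξ τ * h τ‖ ≤ ∫ τ in t..s, ‖h τ‖ / √τ := by
  refine intervalIntegral.norm_integral_le_of_norm_le hts (ae_of_all _ fun τ hτ => ?_)
    ((hh.norm.div Real.continuous_sqrt.continuousOn
      fun x hx => (Real.sqrt_pos.2 (ht.trans_le hx.1)).ne').intervalIntegrable_of_Icc hts)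
  have hτ0 : 0 < √τ := Real.sqrt_pos.2 (ht.trans hτ.1)
  have hτξ : τ ≤ (ξ ^ 2)⁻¹ := (le_max_iff.1 (hτ.2.trans hs)).resolve_left hτ.1.not_ge
  rw [norm_mul, norm_mul, norm_mul, norm_phase, Complex.norm_I, Complex.norm_real,
    Real.norm_eq_abs, le_div_iff₀ hτ0]
  nlinarith [abs_mul_sqrt_le_one hτξ, norm_nonneg (h τ)]

theorem exists_tendsto_integral_phase {ξ s : ℝ} {h h' : ℝ → ℂ} (hs : (ξ ^ 2)⁻¹ ≤ s)
    (hd : ∀ x ∈ Ici s, HasDerivAt h (h' x) x) (hc : ContinuousOn h' (Ici s))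
    (hlim : Tendsto h atTop (𝓝 0)) (hint : IntegrableOn (fun τ => √τ * ‖h' τ‖) (Ioi s)) :
    ∃ T, Tendsto (fun R => ∫ τ in s..R, Complex.I * ξ * phase ξ τ * h τ) atTop (𝓝 T) ∧
      ‖T‖ ≤ 2 * (√s * ‖h s‖) + 2 * ∫ τ in Ioi s, √τ * ‖h' τ‖ := by
  set v : ℝ → ℂ := fun τ => -2 / (ξ : ℂ) * phase ξ τ
  have hv : ∀ τ ∈ Ici s, ‖v τ‖ ≤ 2 * √τ := fun τ hτ => by
    rw [norm_phase_primitive]; gcongr; exact inv_abs_le_sqrt (hs.trans hτ)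
  have hcv : Continuous v := continuous_const.mul (continuous_phase ξ)
  have hh'v : ∀ τ ∈ Ioi s, ‖(h' * v) τ‖ ≤ 2 * (√τ * ‖h' τ‖) := fun τ hτ => by
    rw [Pi.mul_apply, norm_mul]
    nlinarith [hv τ (mem_Ici.2 (le_of_lt hτ)), norm_nonneg (h' τ)]
  have hint' : IntegrableOn (h' * v) (Ioi s) :=
    (hint.const_mul 2).mono' (((hc.mono Ioi_subset_Ici_self).mul hcv.continuousOn)
      |>.aestronglyMeasurable measurableSet_Ioi)
      ((ae_restrict_iff' measurableSet_Ioi).2 (ae_of_all _ hh'v))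
  have hhv : Tendsto (h * v) atTop (𝓝 0) := by
    have : Tendsto (fun R => 2 * |ξ|⁻¹ * ‖h R‖) atTop (𝓝 0) := by
      simpa using (tendsto_norm_zero.comp hlim).const_mul (2 * |ξ|⁻¹)
    refine squeeze_zero_norm (fun R => ?_) this
    rw [Pi.mul_apply, norm_mul, norm_phase_primitive, mul_comm]
  refine ⟨_, (tendsto_integral_mul_deriv_atTop hd (fun τ _ => hasDerivAt_phase_primitive ξ τ)
    hc ((continuous_const.mul (continuous_phase ξ)).continuousOn) hhv hint').congr fun R => ?_, ?_⟩
  · exact intervalIntegral.integral_congr fun τ _ => by ring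
  · have hbdry : ‖h s * v s‖ ≤ 2 * (√s * ‖h s‖) := by
      rw [norm_mul]; nlinarith [hv s self_mem_Ici, norm_nonneg (h s)]
    have htail : ‖∫ τ in Ioi s, h' τ * v τ‖ ≤ 2 * ∫ τ in Ioi s, √τ * ‖h' τ‖ := by
      rw [← integral_const_mul]
      exact norm_integral_le_of_norm_le (hint.const_mul 2)
        ((ae_restrict_iff' measurableSet_Ioi).2 (ae_of_all _ hh'v))
    refine (norm_sub_le _ _).trans ?_
    rw [norm_neg]
    linarith

/-- Tail estimate for the oscillatory boundary integral
`∫_t^∞ i ξ e^{-i ξ² τ/2} h(τ) dτ`. -/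
theorem oscillatory_tail_estimate :
    ∃ C > (0:ℝ), ∀ ξ t : ℝ, 0 < t → ∀ h : ℝ → ℂ,
      ContDiffOn ℝ 1 h (Set.Ici 0) →
      Filter.Tendsto h Filter.atTop (nhds 0) →
      MeasureTheory.IntegrableOn (fun τ => ‖h τ‖ / Real.sqrt τ) (Set.Ioi t) →
      MeasureTheory.IntegrableOn (fun τ => Real.sqrt τ * ‖deriv h τ‖) (Set.Ioi t) →
      ∃ L : ℂ,
        Filter.Tendsto
          (fun R : ℝ => ∫ τ in t..R,
            Complex.I * (ξ : ℂ) *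
              Complex.exp (-Complex.I * (ξ : ℂ) ^ 2 * (τ : ℂ) / 2) * h τ)
          Filter.atTop (nhds L) ∧
        ‖L‖ ≤ C * (Real.sqrt t * ‖h t‖ +
          (∫ τ in Set.Ioi t, ‖h τ‖ / Real.sqrt τ) +
          (∫ τ in Set.Ioi t, Real.sqrt τ * ‖deriv h τ‖)) := by
  refine ⟨4, by norm_num, fun ξ t ht h hh hlim hI₁ hI₂ => ?_⟩
  set s := max t (ξ ^ 2)⁻¹
  have hts : t ≤ s := le_max_left _ _
  obtain ⟨hd, hd'⟩ := hh.hasDerivAt_deriv_Ici_of_lt ht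
  have hf : ContinuousOn (fun τ => Complex.I * ξ * phase ξ τ * h τ) (Ici t) :=
    (continuous_const.mul (continuous_phase ξ)).continuousOn.mul
      fun x hx => (hd x hx).continuousAt.continuousWithinAt
  obtain ⟨T, hT, hTle⟩ := exists_tendsto_integral_phase (le_max_right t _)
    (fun x hx => hd x (hts.trans hx)) (hd'.mono (Ici_subset_Ici.2 hts)) hlim
    (hI₂.mono_set (Ioi_subset_Ioi hts))
  refine ⟨(∫ τ in t..s, Complex.I * ξ * phase ξ τ * h τ) + T,
    (tendsto_const_nhds.add hT).congr' ?_, ?_⟩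
  · filter_upwards [eventually_ge_atTop s] with R hR
    exact intervalIntegral.integral_add_adjacent_intervals
      ((hf.mono Icc_subset_Ici_self).intervalIntegrable_of_Icc hts)
      ((hf.mono (Icc_subset_Ici_iff hR |>.2 hts)).intervalIntegrable_of_Icc hR)
  have hhead := norm_integral_phase_le_of_le_max ht hts le_rfl
    fun x hx => (hd x hx.1).continuousAt.continuousWithinAt
  have hbdry := sqrt_mul_norm_le_add_integral ht hts (fun x hx => hd x hx.1)
    (hd'.mono Icc_subset_Ici_self)
  have hJ₁ := intervalIntegral_le_setIntegral_Ioi hts hI₁ fun τ => by positivity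
  have hJ₂ := intervalIntegral_le_setIntegral_Ioi hts hI₂ fun τ => by positivity
  have hK : ∫ τ in Ioi s, √τ * ‖deriv h τ‖ ≤ ∫ τ in Ioi t, √τ * ‖deriv h τ‖ :=
    setIntegral_mono_set hI₂ (ae_of_all _ fun τ => by positivity)
      (Ioi_subset_Ioi hts).eventuallyLE
  have hI₁0 : 0 ≤ ∫ τ in Ioi t, ‖h τ‖ / √τ := integral_nonneg fun τ => by positivity
  have hI₂0 : 0 ≤ ∫ τ in Ioi t, √τ * ‖deriv h τ‖ := integral_nonneg fun τ => by positivity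
  have ht0 : 0 ≤ √t * ‖h t‖ := by positivity
  exact (norm_add_le _ T).trans (by linarith)
end

section
/- Full-line estimate for the oscillatory boundary integral: there is an absolute constant C > 0 such that for every ξ ∈ ℝ and every h ∈ C¹([0,∞)) with h(τ) → 0 as τ → ∞, ∫₀^∞ |h(τ)| τ^{−1/2} dτ < ∞ and ∫₀^∞ τ^{1/2} |h'(τ)| dτ < ∞, the improper integral ∫₀^∞ i ξ e^{−i ξ² τ/2} h(τ) dτ converges and satisfies | ∫₀^∞ i ξ e^{−i ξ² τ/2} h(τ) dτ | ≤ C ( ∫₀^∞ τ^{1/2} |h'(τ)| dτ + ∫₀^∞ |h(τ)| τ^{−1/2} dτ ). -/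
/-!
Split the integral at `δ = ξ⁻²`. On `(0, δ)` one has `|ξ| ≤ τ^{-1/2}`, so that piece is bounded by
`∫ |h| τ^{-1/2}`. On `(δ, ∞)` the kernel `i ξ e^{-i ξ² τ/2}` is the derivative of
`-(2/ξ) e^{-i ξ² τ/2}`, which has modulus `2/|ξ|`; integrating by parts leaves the boundary term
at `δ` and an absolutely convergent integral against `h'`, each at most
`(2/|ξ|) ∫_δ^∞ |h'| ≤ 2 ∫ τ^{1/2} |h'|`, because `τ^{1/2} ≥ 1/|ξ|` there. Hence `C = 4`.
-/

open MeasureTheory Set Filter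

theorem norm_le_integral_Ioi_norm_deriv {E : Type*} [NormedAddCommGroup E] [NormedSpace ℝ E]
    [CompleteSpace E] {f f' : ℝ → E} {a : ℝ}
    (hf : ∀ x ∈ Ici a, HasDerivAt f (f' x) x) (hf' : IntegrableOn f' (Ioi a))
    (hlim : Tendsto f atTop (nhds 0)) :
    ‖f a‖ ≤ ∫ x in Ioi a, ‖f' x‖ := by
  have hftc := integral_Ioi_of_hasDerivAt_of_tendsto' hf hf' hlim
  rw [zero_sub] at hftc
  calc ‖f a‖ = ‖∫ x in Ioi a, f' x‖ := by rw [hftc, norm_neg]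
    _ ≤ ∫ x in Ioi a, ‖f' x‖ := norm_integral_le_integral_norm _

theorem exists_tendsto_integral_mul_deriv_of_norm_le {A : Type*} [NormedRing A]
    [NormedAlgebra ℝ A] [CompleteSpace A] {u v u' v' : ℝ → A} {a M : ℝ}
    (hu : ∀ x ∈ Ici a, HasDerivAt u (u' x) x) (hv : ∀ x ∈ Ici a, HasDerivAt v (v' x) x)
    (hu' : IntegrableOn u' (Ioi a)) (hv' : ∀ b, IntervalIntegrable v' volume a b)
    (hvM : ∀ x ∈ Ici a, ‖v x‖ ≤ M) (hlim : Tendsto u atTop (nhds 0)) :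
    ∃ L, Tendsto (fun b => ∫ x in a..b, u x * v' x) atTop (nhds L) ∧
      ‖L‖ ≤ 2 * M * ∫ x in Ioi a, ‖u' x‖ := by
  have hv_cont : ContinuousOn v (Ici a) := fun x hx => (hv x hx).continuousAt.continuousWithinAt
  have hu'v : IntegrableOn (fun x => u' x * v x) (Ioi a) :=
    hu'.mul_bdd ((hv_cont.mono Ioi_subset_Ici_self).aestronglyMeasurable measurableSet_Ioi)
      ((ae_restrict_mem measurableSet_Ioi).mono fun x hx => hvM x (Ioi_subset_Ici_self hx))
  have huv_lim : Tendsto (fun x => u x * v x) atTop (nhds 0) :=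
    hlim.zero_mul_isBoundedUnder_le ⟨M, eventually_map.2 <|
      (eventually_ge_atTop a).mono fun x hx => hvM x hx⟩
  have hparts : ∀ b ≥ a, ∫ x in a..b, u x * v' x
      = u b * v b - u a * v a - ∫ x in a..b, u' x * v x := fun b hab =>
    intervalIntegral.integral_mul_deriv_eq_deriv_mul
      (fun x hx => hu x (uIcc_of_le hab ▸ hx).1) (fun x hx => hv x (uIcc_of_le hab ▸ hx).1)
      ((intervalIntegrable_iff_integrableOn_Ioc_of_le hab).2 (hu'.mono_set Ioc_subset_Ioi_self))
      (hv' b)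
  refine ⟨-(u a * v a) - ∫ x in Ioi a, u' x * v x, ?_, ?_⟩
  · have := (huv_lim.sub_const (u a * v a)).sub
      (intervalIntegral_tendsto_integral_Ioi a hu'v tendsto_id)
    rw [zero_sub] at this
    exact this.congr' <| (eventually_ge_atTop a).mono fun b hb => (hparts b hb).symm
  · have hua : ‖u a‖ ≤ ∫ x in Ioi a, ‖u' x‖ := norm_le_integral_Ioi_norm_deriv hu hu' hlim
    have hint : ‖∫ x in Ioi a, u' x * v x‖ ≤ M * ∫ x in Ioi a, ‖u' x‖ := by
      rw [← integral_const_mul]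
      refine norm_integral_le_of_norm_le (hu'.norm.const_mul M) ?_
      filter_upwards [ae_restrict_mem measurableSet_Ioi] with x hx
      calc ‖u' x * v x‖ ≤ ‖u' x‖ * ‖v x‖ := norm_mul_le _ _
        _ ≤ M * ‖u' x‖ := by
          rw [mul_comm]
          exact mul_le_mul_of_nonneg_right (hvM x (Ioi_subset_Ici_self hx)) (norm_nonneg _)
    calc ‖-(u a * v a) - ∫ x in Ioi a, u' x * v x‖
        ≤ ‖u a‖ * ‖v a‖ + ‖∫ x in Ioi a, u' x * v x‖ := by
          refine (norm_sub_le _ _).trans ?_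
          rw [norm_neg]; gcongr; exact norm_mul_le _ _
      _ ≤ (∫ x in Ioi a, ‖u' x‖) * M + M * ∫ x in Ioi a, ‖u' x‖ := by
          gcongr
          exact hvM a self_mem_Ici
      _ = 2 * M * ∫ x in Ioi a, ‖u' x‖ := by ring

theorem tendsto_intervalIntegral_add_of_tendsto {E : Type*} [NormedAddCommGroup E]
    [NormedSpace ℝ E] {f : ℝ → E} {a c : ℝ} {L : E} (hf : ContinuousOn f (Ici a)) (hc : a ≤ c)
    (hL : Tendsto (fun b => ∫ x in c..b, f x) atTop (nhds L)) :
    Tendsto (fun b => ∫ x in a..b, f x) atTop (nhds ((∫ x in a..c, f x) + L)) := by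
  have hf_int : ∀ {b b'}, a ≤ b → a ≤ b' → IntervalIntegrable f volume b b' := fun hb hb' =>
    (hf.mono fun _ hx => (le_min hb hb').trans hx.1).intervalIntegrable
  refine (tendsto_const_nhds.add hL).congr' ?_
  filter_upwards [eventually_ge_atTop a] with b hb
  exact intervalIntegral.integral_add_adjacent_intervals (hf_int le_rfl hc) (hf_int hc hb)

theorem le_inv_sqrt_mul_sqrt_mul {δ τ r : ℝ} (hδ : 0 < δ) (hτ : δ ≤ τ) (hr : 0 ≤ r) :
    r ≤ (√δ)⁻¹ * (√τ * r) := by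
  rw [le_inv_mul_iff₀ (Real.sqrt_pos.2 hδ)]
  exact mul_le_mul_of_nonneg_right (Real.sqrt_le_sqrt hτ) hr

theorem integrableOn_Ioi_of_integrableOn_sqrt_mul_norm {E : Type*} [NormedAddCommGroup E]
    {f : ℝ → E} {δ : ℝ} (hδ : 0 < δ)
    (hmeas : AEStronglyMeasurable f (volume.restrict (Ioi δ)))
    (hf : IntegrableOn (fun τ => √τ * ‖f τ‖) (Ioi 0)) :
    IntegrableOn f (Ioi δ) :=
  ((hf.mono_set (Ioi_subset_Ioi hδ.le)).const_mul (√δ)⁻¹).mono' hmeas <|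
    (ae_restrict_mem measurableSet_Ioi).mono fun _ hτ =>
      le_inv_sqrt_mul_sqrt_mul hδ (le_of_lt hτ) (norm_nonneg _)

theorem integral_Ioi_norm_le_inv_sqrt_mul {E : Type*} [NormedAddCommGroup E] {f : ℝ → E} {δ : ℝ}
    (hδ : 0 < δ) (hf : IntegrableOn (fun τ => √τ * ‖f τ‖) (Ioi 0)) :
    ∫ τ in Ioi δ, ‖f τ‖ ≤ (√δ)⁻¹ * ∫ τ in Ioi 0, √τ * ‖f τ‖ :=
  calc ∫ τ in Ioi δ, ‖f τ‖ ≤ ∫ τ in Ioi δ, (√δ)⁻¹ * (√τ * ‖f τ‖) :=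
        integral_mono_of_nonneg (Eventually.of_forall fun _ => norm_nonneg _)
          ((hf.mono_set (Ioi_subset_Ioi hδ.le)).const_mul _) <|
          (ae_restrict_mem measurableSet_Ioi).mono fun _ hτ =>
            le_inv_sqrt_mul_sqrt_mul hδ (le_of_lt hτ) (norm_nonneg _)
    _ = (√δ)⁻¹ * ∫ τ in Ioi δ, √τ * ‖f τ‖ := integral_const_mul _ _
    _ ≤ (√δ)⁻¹ * ∫ τ in Ioi 0, √τ * ‖f τ‖ :=
        mul_le_mul_of_nonneg_left (setIntegral_mono_set hf
          (Eventually.of_forall fun _ => by positivity) (Ioi_subset_Ioi hδ.le).eventuallyLE)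
          (by positivity)

open Complex

noncomputable def oscillatoryPhase (ξ τ : ℝ) : ℂ := cexp (-I * ξ ^ 2 * τ / 2)

theorem norm_oscillatoryPhase (ξ τ : ℝ) : ‖oscillatoryPhase ξ τ‖ = 1 := by
  have : -I * ξ ^ 2 * τ / 2 = ((-(ξ ^ 2 * τ / 2) : ℝ) : ℂ) * I := by push_cast; ring
  rw [oscillatoryPhase, this, norm_exp_ofReal_mul_I]

theorem continuous_oscillatoryPhase (ξ : ℝ) : Continuous (oscillatoryPhase ξ) := by
  unfold oscillatoryPhase; fun_prop

theorem hasDerivAt_oscillatoryPhase (ξ τ : ℝ) :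
    HasDerivAt (oscillatoryPhase ξ) (-I * ξ ^ 2 / 2 * oscillatoryPhase ξ τ) τ := by
  have hlin : HasDerivAt (fun t : ℝ => -I * ξ ^ 2 * t / 2) (-I * ξ ^ 2 / 2) τ := by
    simpa only [id, ofReal_one, mul_one] using
      ((hasDerivAt_id τ).ofReal_comp.const_mul (-I * ξ ^ 2)).div_const 2
  exact hlin.cexp.congr_deriv (mul_comm _ _)

theorem hasDerivAt_oscillatoryPhase_primitive {ξ : ℝ} (hξ : ξ ≠ 0) (τ : ℝ) :
    HasDerivAt (fun t => -2 / ξ * oscillatoryPhase ξ t) (I * ξ * oscillatoryPhase ξ τ) τ := by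
  refine ((hasDerivAt_oscillatoryPhase ξ τ).const_mul (-2 / ξ : ℂ)).congr_deriv ?_
  have : (ξ : ℂ) ≠ 0 := ofReal_ne_zero.2 hξ
  field_simp

theorem norm_integral_oscillatory_le_integral_div_sqrt (ξ : ℝ) {h : ℝ → ℂ}
    (hInt : IntegrableOn (fun τ => ‖h τ‖ / √τ) (Ioi 0)) :
    ‖∫ τ in (0 : ℝ)..(ξ ^ 2)⁻¹, I * ξ * oscillatoryPhase ξ τ * h τ‖
      ≤ ∫ τ in Ioi 0, ‖h τ‖ / √τ := by
  have hδ : (0 : ℝ) ≤ (ξ ^ 2)⁻¹ := by positivity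
  have hpt : ∀ τ ∈ Ioc 0 (ξ ^ 2)⁻¹, ‖I * ξ * oscillatoryPhase ξ τ * h τ‖ ≤ ‖h τ‖ / √τ := by
    rintro τ ⟨hτ0, hτδ⟩
    have hsqrt : |ξ| * √τ ≤ 1 := by
      calc |ξ| * √τ ≤ |ξ| * √((ξ ^ 2)⁻¹) := by gcongr
        _ ≤ 1 := by
          rw [Real.sqrt_inv, Real.sqrt_sq_eq_abs]
          exact mul_inv_le_one
    rw [le_div_iff₀ (Real.sqrt_pos.2 hτ0)]
    simp only [norm_mul, norm_I, norm_real, Real.norm_eq_abs, norm_oscillatoryPhase, one_mul,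
      mul_one]
    nlinarith [norm_nonneg (h τ)]
  calc ‖∫ τ in (0 : ℝ)..(ξ ^ 2)⁻¹, I * ξ * oscillatoryPhase ξ τ * h τ‖
      ≤ ∫ τ in (0 : ℝ)..(ξ ^ 2)⁻¹, ‖h τ‖ / √τ :=
        intervalIntegral.norm_integral_le_of_norm_le hδ (Eventually.of_forall hpt)
          ((intervalIntegrable_iff_integrableOn_Ioc_of_le hδ).2
            (hInt.mono_set Ioc_subset_Ioi_self))
    _ = ∫ τ in Ioc 0 (ξ ^ 2)⁻¹, ‖h τ‖ / √τ := intervalIntegral.integral_of_le hδ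
    _ ≤ ∫ τ in Ioi 0, ‖h τ‖ / √τ :=
        setIntegral_mono_set hInt (Eventually.of_forall fun _ => by positivity)
          Ioc_subset_Ioi_self.eventuallyLE

theorem exists_tendsto_integral_oscillatory {ξ : ℝ} (hξ : ξ ≠ 0) {h : ℝ → ℂ}
    (hh : ContDiffOn ℝ 1 h (Ici 0)) (hlim : Tendsto h atTop (nhds 0))
    (hInt : IntegrableOn (fun τ => ‖h τ‖ / √τ) (Ioi 0))
    (hInt' : IntegrableOn (fun τ => √τ * ‖deriv h τ‖) (Ioi 0)) :
    ∃ L, Tendsto (fun R => ∫ τ in (0 : ℝ)..R, I * ξ * oscillatoryPhase ξ τ * h τ) atTop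
        (nhds L) ∧
      ‖L‖ ≤ 4 * (∫ τ in Ioi 0, √τ * ‖deriv h τ‖) + ∫ τ in Ioi 0, ‖h τ‖ / √τ := by
  set δ : ℝ := (ξ ^ 2)⁻¹
  have hδ : 0 < δ := by positivity
  have hξ' : 0 < |ξ| := abs_pos.2 hξ
  have hh_deriv : ∀ τ ∈ Ici δ, HasDerivAt h (deriv h τ) τ := fun τ hτ =>
    ((hh.differentiableOn one_ne_zero).differentiableAt
      (Ici_mem_nhds (hδ.trans_le hτ))).hasDerivAt
  have hh'_int : IntegrableOn (deriv h) (Ioi δ) :=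
    integrableOn_Ioi_of_integrableOn_sqrt_mul_norm hδ (aestronglyMeasurable_deriv _ _) hInt'
  have hh'_tail : ∫ τ in Ioi δ, ‖deriv h τ‖ ≤ |ξ| * ∫ τ in Ioi 0, √τ * ‖deriv h τ‖ := by
    simpa only [δ, Real.sqrt_inv, Real.sqrt_sq_eq_abs, inv_inv] using
      integral_Ioi_norm_le_inv_sqrt_mul hδ hInt'
  have hnorm : ∀ τ ∈ Ici δ, ‖-2 / (ξ : ℂ) * oscillatoryPhase ξ τ‖ ≤ 2 / |ξ| := fun τ _ => by
    simp [norm_oscillatoryPhase]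
  obtain ⟨L, hL, hL_le⟩ := exists_tendsto_integral_mul_deriv_of_norm_le hh_deriv
    (fun τ _ => hasDerivAt_oscillatoryPhase_primitive hξ τ) hh'_int
    (fun _ => ((continuous_const.mul (continuous_oscillatoryPhase ξ)).intervalIntegrable _ _))
    hnorm hlim
  refine ⟨(∫ τ in (0 : ℝ)..δ, I * ξ * oscillatoryPhase ξ τ * h τ) + L, ?_, ?_⟩
  · refine tendsto_intervalIntegral_add_of_tendsto
      ((continuous_const.mul (continuous_oscillatoryPhase ξ)).continuousOn.mul hh.continuousOn)
      hδ.le (hL.congr fun R => ?_)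
    exact intervalIntegral.integral_congr fun τ _ => mul_comm _ _
  · calc ‖(∫ τ in (0 : ℝ)..δ, I * ξ * oscillatoryPhase ξ τ * h τ) + L‖
        ≤ (∫ τ in Ioi 0, ‖h τ‖ / √τ)
            + 2 * (2 / |ξ|) * (|ξ| * ∫ τ in Ioi 0, √τ * ‖deriv h τ‖) :=
          (norm_add_le _ _).trans <| add_le_add
            (norm_integral_oscillatory_le_integral_div_sqrt ξ hInt)
            (hL_le.trans (by gcongr))
      _ = 4 * (∫ τ in Ioi 0, √τ * ‖deriv h τ‖) + ∫ τ in Ioi 0, ‖h τ‖ / √τ := by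
          field_simp
          ring

/-- Full-line estimate for the oscillatory boundary integral
`∫₀^∞ i ξ e^{-i ξ² τ/2} h(τ) dτ`. -/
theorem oscillatory_full_estimate :
    ∃ C > (0:ℝ), ∀ ξ : ℝ, ∀ h : ℝ → ℂ,
      ContDiffOn ℝ 1 h (Set.Ici 0) →
      Filter.Tendsto h Filter.atTop (nhds 0) →
      MeasureTheory.IntegrableOn (fun τ => ‖h τ‖ / Real.sqrt τ) (Set.Ioi 0) →
      MeasureTheory.IntegrableOn (fun τ => Real.sqrt τ * ‖deriv h τ‖) (Set.Ioi 0) →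
      ∃ L : ℂ,
        Filter.Tendsto
          (fun R : ℝ => ∫ τ in (0:ℝ)..R,
            Complex.I * (ξ : ℂ) *
              Complex.exp (-Complex.I * (ξ : ℂ) ^ 2 * (τ : ℂ) / 2) * h τ)
          Filter.atTop (nhds L) ∧
        ‖L‖ ≤ C * ((∫ τ in Set.Ioi (0:ℝ), Real.sqrt τ * ‖deriv h τ‖) +
          (∫ τ in Set.Ioi (0:ℝ), ‖h τ‖ / Real.sqrt τ)) := by
  refine ⟨4, by norm_num, fun ξ h hh hlim hInt hInt' => ?_⟩
  have hI : 0 ≤ ∫ τ in Ioi (0 : ℝ), √τ * ‖deriv h τ‖ := integral_nonneg fun _ => by positivity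
  have hI' : 0 ≤ ∫ τ in Ioi (0 : ℝ), ‖h τ‖ / √τ := integral_nonneg fun _ => by positivity
  rcases eq_or_ne ξ 0 with rfl | hξ
  · exact ⟨0, by simp, by simp; positivity⟩
  · obtain ⟨L, hL, hL_le⟩ := exists_tendsto_integral_oscillatory hξ hh hlim hInt hInt'
    exact ⟨L, hL, by linarith⟩
end

section
/- Uniform bound for the truncated oscillatory boundary integral under polynomial decay: let β > 1/2 and ε > 0. There is a constant C depending only on β such that for every h ∈ C¹([0,∞)) with |h(τ)| ≤ ε (1+τ)^{−β} and |h'(τ)| ≤ ε (1+τ)^{−1−β} for all τ ≥ 0, one has for all ξ ∈ ℝ and all t ≥ 0: | ∫₀ᵗ ξ e^{−i ξ² τ/2} h(τ) dτ | ≤ C ε. -/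
/-!
Split `[0, t]` at the time scale `ξ⁻²` of the phase `ξ² τ / 2`. Before it the phase does not
oscillate and the trivial bound `|ξ| ∫₀^{ξ⁻²} (1 + τ)^(-β) dτ ≤ |ξ| ∫₀^{ξ⁻²} (1 + τ)^(-1/2) dτ ≤ 2`
suffices; this is where `β ≥ 1/2` enters. After it, integrate by parts against the
antiderivative `(2i/ξ) e^{-iξ²τ/2}`, of size `2/|ξ|`: the boundary terms and `∫ |h'|` are
`O((1 + ξ⁻²)^(-β))`, and `(1 + ξ⁻²)^(-β) ≤ (1 + ξ⁻²)^(-1/2) ≤ |ξ|`.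
-/

open MeasureTheory Set Filter Complex

theorem integral_one_add_rpow {r a b : ℝ} (hr : r ≠ -1) (ha : -1 < a) (hb : -1 < b) :
    ∫ τ in a..b, (1 + τ) ^ r = ((1 + b) ^ (r + 1) - (1 + a) ^ (r + 1)) / (r + 1) := by
  have h0 : (0 : ℝ) ∉ uIcc (1 + a) (1 + b) := by
    rw [mem_uIcc]; rintro (⟨h, -⟩ | ⟨h, -⟩) <;> linarith
  rw [intervalIntegral.integral_comp_add_left (· ^ r) 1, integral_rpow (Or.inr ⟨hr, h0⟩)]

theorem intervalIntegrable_one_add_rpow (r : ℝ) {a b : ℝ} (ha : -1 < a) (hb : -1 < b) :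
    IntervalIntegrable (fun τ : ℝ => (1 + τ) ^ r) volume a b := by
  refine ContinuousOn.intervalIntegrable
    (ContinuousOn.rpow_const (by fun_prop) fun τ hτ => Or.inl ?_)
  rw [mem_uIcc] at hτ
  rcases hτ with ⟨h, -⟩ | ⟨h, -⟩ <;> linarith

theorem intervalIntegrable_deriv_of_norm_le {F : Type*} [NormedAddCommGroup F] [NormedSpace ℝ F]
    [CompleteSpace F] {f : ℝ → F} {g : ℝ → ℝ} {a b : ℝ} (hg : IntervalIntegrable g volume a b)
    (hfg : ∀ x ∈ uIoc a b, ‖deriv f x‖ ≤ g x) : IntervalIntegrable (deriv f) volume a b :=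
  hg.mono_fun' (stronglyMeasurable_deriv f).aestronglyMeasurable
    ((ae_restrict_mem measurableSet_uIoc).mono hfg)

theorem norm_integral_deriv_mul_le {A : Type*} [NormedRing A] [NormedAlgebra ℝ A]
    [CompleteSpace A] {u u' v v' : ℝ → A} {a b M : ℝ} (hab : a ≤ b)
    (hu : ∀ x ∈ Icc a b, HasDerivAt u (u' x) x) (hv : ContinuousOn v (Icc a b))
    (hv' : ∀ x ∈ Ioo a b, HasDerivAt v (v' x) x)
    (hu'_int : IntervalIntegrable u' volume a b) (hv'_int : IntervalIntegrable v' volume a b)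
    (hM : ∀ x ∈ Icc a b, ‖u x‖ ≤ M) :
    ‖∫ x in a..b, u' x * v x‖ ≤ M * (‖v a‖ + ‖v b‖ + ∫ x in a..b, ‖v' x‖) := by
  have parts := intervalIntegral.integral_mul_deriv_eq_deriv_mul_of_hasDeriv_right
    (fun x hx => (hu x (uIcc_of_le hab ▸ hx)).continuousAt.continuousWithinAt)
    (uIcc_of_le hab ▸ hv)
    (fun x hx => (hu x (Ioo_subset_Icc_self (by simpa [hab] using hx))).hasDerivWithinAt)
    (fun x hx => (hv' x (by simpa [hab] using hx)).hasDerivWithinAt) hu'_int hv'_int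
  have h_bdry : ∀ x ∈ Icc a b, ‖u x * v x‖ ≤ M * ‖v x‖ := fun x hx =>
    (norm_mul_le _ _).trans (mul_le_mul_of_nonneg_right (hM x hx) (norm_nonneg _))
  have h_bdry_a := h_bdry a (left_mem_Icc.2 hab)
  have h_bdry_b := h_bdry b (right_mem_Icc.2 hab)
  have h_rest : ‖∫ x in a..b, u x * v' x‖ ≤ M * ∫ x in a..b, ‖v' x‖ := by
    rw [← intervalIntegral.integral_const_mul]
    refine intervalIntegral.norm_integral_le_of_norm_le hab
      (Eventually.of_forall fun x hx => ?_) (hv'_int.norm.const_mul M)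
    exact (norm_mul_le _ _).trans
      (mul_le_mul_of_nonneg_right (hM x (Ioc_subset_Icc_self hx)) (norm_nonneg _))
  rw [eq_sub_iff_add_eq, ← eq_sub_iff_add_eq'] at parts
  rw [parts]
  calc ‖u b * v b - u a * v a - ∫ x in a..b, u x * v' x‖
      ≤ ‖u b * v b‖ + ‖u a * v a‖ + ‖∫ x in a..b, u x * v' x‖ :=
        norm_sub_le_of_le (norm_sub_le _ _) le_rfl
    _ ≤ M * (‖v a‖ + ‖v b‖ + ∫ x in a..b, ‖v' x‖) := by linarith

theorem hasDerivAt_exp_ofReal_mul_I_div (ω x : ℝ) (hω : ω ≠ 0) :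
    HasDerivAt (fun y : ℝ => exp (↑(ω * y) * I) / (ω * I)) (exp (↑(ω * x) * I)) x := by
  refine ((((hasDerivAt_id x).const_mul ω).ofReal_comp.mul_const I).cexp.div_const
    (ω * I)).congr_deriv ?_
  have : (ω : ℂ) * I ≠ 0 := mul_ne_zero (ofReal_ne_zero.2 hω) I_ne_zero
  simp [mul_div_assoc, div_self this]

theorem norm_exp_ofReal_mul_I_div (ω x : ℝ) :
    ‖exp (↑(ω * x) * I) / (ω * I)‖ = 1 / |ω| := by
  rw [norm_div, norm_exp_ofReal_mul_I, norm_mul, norm_I, mul_one, norm_real, Real.norm_eq_abs]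

theorem norm_integral_exp_ofReal_mul_I_mul_le {v v' : ℝ → ℂ} {ω a b : ℝ} (hω : ω ≠ 0)
    (hab : a ≤ b) (hv : ContinuousOn v (Icc a b)) (hv' : ∀ x ∈ Ioo a b, HasDerivAt v (v' x) x)
    (hv'_int : IntervalIntegrable v' volume a b) :
    ‖∫ x in a..b, exp (↑(ω * x) * I) * v x‖ ≤ (‖v a‖ + ‖v b‖ + ∫ x in a..b, ‖v' x‖) / |ω| :=
  (norm_integral_deriv_mul_le hab (fun x _ => hasDerivAt_exp_ofReal_mul_I_div ω x hω) hv hv'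
    ((by fun_prop : Continuous fun x : ℝ => exp (↑(ω * x) * I)).intervalIntegrable a b)
    hv'_int fun x _ => (norm_exp_ofReal_mul_I_div ω x).le).trans_eq (one_div_mul_eq_div _ _)

theorem neg_I_mul_sq_mul_div_two (ξ τ : ℝ) :
    -I * (ξ : ℂ) ^ 2 * τ / 2 = ((-(ξ ^ 2 / 2) * τ : ℝ) : ℂ) * I := by
  push_cast; ring

theorem norm_oscillatory_integrand (ξ τ : ℝ) (h : ℝ → ℂ) :
    ‖(ξ : ℂ) * exp (-I * (ξ : ℂ) ^ 2 * τ / 2) * h τ‖ = |ξ| * ‖h τ‖ := by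
  rw [norm_mul, norm_mul, neg_I_mul_sq_mul_div_two, norm_exp_ofReal_mul_I, norm_real,
    Real.norm_eq_abs, mul_one]

section Decay

variable {β ε ξ a b : ℝ} {h : ℝ → ℂ}

theorem intervalIntegrable_oscillatory_integrand (hh : ContinuousOn h (Ici 0)) (ha : 0 ≤ a)
    (hb : 0 ≤ b) :
    IntervalIntegrable (fun τ : ℝ => (ξ : ℂ) * exp (-I * (ξ : ℂ) ^ 2 * τ / 2) * h τ) volume a b :=
  ((by fun_prop : Continuous fun τ : ℝ => (ξ : ℂ) * exp (-I * (ξ : ℂ) ^ 2 * τ / 2)).continuousOn.mul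
    (hh.mono fun _ hx => (le_min ha hb).trans hx.1)).intervalIntegrable

theorem norm_add_norm_add_integral_norm_deriv_le (hβ : 0 < β) (hε : 0 ≤ ε)
    (hb : ∀ τ, 0 ≤ τ → ‖h τ‖ ≤ ε * (1 + τ) ^ (-β))
    (hd : ∀ τ, 0 ≤ τ → ‖deriv h τ‖ ≤ ε * (1 + τ) ^ (-1 - β)) (ha : 0 ≤ a) (hab : a ≤ b) :
    ‖h a‖ + ‖h b‖ + ∫ τ in a..b, ‖deriv h τ‖ ≤ (2 + 1 / β) * ε * (1 + a) ^ (-β) := by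
  have h_mono : (1 + b) ^ (-β) ≤ (1 + a) ^ (-β) :=
    Real.rpow_le_rpow_of_nonpos (by linarith) (by linarith) (by linarith)
  have h_int : ∫ τ in a..b, ‖deriv h τ‖ ≤ ε * ((1 + a) ^ (-β) / β) := calc
    ∫ τ in a..b, ‖deriv h τ‖ ≤ ∫ τ in a..b, ε * (1 + τ) ^ (-1 - β) :=
      (le_abs_self _).trans <| intervalIntegral.norm_integral_le_of_norm_le hab
        (Eventually.of_forall fun τ hτ => (norm_norm _).trans_le (hd τ (ha.trans hτ.1.le)))
        ((intervalIntegrable_one_add_rpow _ (by linarith) (by linarith)).const_mul ε)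
    _ = ε * (((1 + a) ^ (-β) - (1 + b) ^ (-β)) / β) := by
      rw [intervalIntegral.integral_const_mul,
        integral_one_add_rpow (by linarith) (by linarith) (by linarith),
        show -1 - β + 1 = -β by ring, div_neg, ← neg_div, neg_sub]
    _ ≤ ε * ((1 + a) ^ (-β) / β) := by
      gcongr
      exact sub_le_self _ (Real.rpow_nonneg (by linarith) _)
  have h_mono_ε := mul_le_mul_of_nonneg_left h_mono hε
  have h_split : (2 + 1 / β) * ε * (1 + a) ^ (-β)
      = ε * (1 + a) ^ (-β) + ε * (1 + a) ^ (-β) + ε * ((1 + a) ^ (-β) / β) := by ring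
  linarith [hb a ha, hb b (ha.trans hab)]

theorem norm_integral_oscillatory_le_of_decay (hβ : 0 < β) (hε : 0 ≤ ε)
    (hh : ContDiffOn ℝ 1 h (Ici 0)) (hb : ∀ τ, 0 ≤ τ → ‖h τ‖ ≤ ε * (1 + τ) ^ (-β))
    (hd : ∀ τ, 0 ≤ τ → ‖deriv h τ‖ ≤ ε * (1 + τ) ^ (-1 - β)) (hξ : ξ ≠ 0) (ha : 0 ≤ a)
    (hab : a ≤ b) :
    ‖∫ τ in a..b, (ξ : ℂ) * exp (-I * (ξ : ℂ) ^ 2 * τ / 2) * h τ‖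
      ≤ 2 * (2 + 1 / β) * ε * ((1 + a) ^ (-β) / |ξ|) := by
  have hh' : ∀ x ∈ Ioo a b, HasDerivAt h (deriv h x) x := fun x hx =>
    ((hh.contDiffAt (Ici_mem_nhds (ha.trans_lt hx.1))).differentiableAt one_ne_zero).hasDerivAt
  have hh'_int : IntervalIntegrable (deriv h) volume a b :=
    intervalIntegrable_deriv_of_norm_le
      ((intervalIntegrable_one_add_rpow _ (by linarith) (by linarith)).const_mul ε)
      fun x hx => hd x (ha.trans (uIoc_of_le hab ▸ hx).1.le)
  have hω : -(ξ ^ 2 / 2) ≠ 0 := by simpa using hξ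
  simp_rw [neg_I_mul_sq_mul_div_two, mul_assoc]
  rw [intervalIntegral.integral_const_mul, norm_mul, norm_real, Real.norm_eq_abs]
  calc |ξ| * ‖∫ τ in a..b, exp (((-(ξ ^ 2 / 2) * τ : ℝ) : ℂ) * I) * h τ‖
      ≤ |ξ| * ((‖h a‖ + ‖h b‖ + ∫ τ in a..b, ‖deriv h τ‖) / |-(ξ ^ 2 / 2)|) := by
        gcongr
        exact norm_integral_exp_ofReal_mul_I_mul_le hω hab
          (hh.continuousOn.mono fun _ hx => ha.trans hx.1) hh' hh'_int
    _ ≤ |ξ| * ((2 + 1 / β) * ε * (1 + a) ^ (-β) / |-(ξ ^ 2 / 2)|) := by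
        gcongr
        exact norm_add_norm_add_integral_norm_deriv_le hβ hε hb hd ha hab
    _ = _ := by
        have : |ξ| ≠ 0 := abs_ne_zero.2 hξ
        rw [abs_neg, abs_div, abs_two, abs_sq, ← sq_abs]
        field_simp

theorem one_add_rpow_neg_le_abs (hβ : 1 / 2 ≤ β) (ha : 0 ≤ a) (hξa : 1 ≤ ξ ^ 2 * (1 + a)) :
    (1 + a) ^ (-β) ≤ |ξ| := calc
  (1 + a) ^ (-β) ≤ (1 + a) ^ (-(1 / 2 : ℝ)) :=
    Real.rpow_le_rpow_of_exponent_le (by linarith) (by linarith)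
  _ = (√(1 + a))⁻¹ := by rw [Real.rpow_neg (by linarith), Real.sqrt_eq_rpow]
  _ ≤ |ξ| := by
    rw [inv_le_iff_one_le_mul₀ (Real.sqrt_pos.2 (by linarith)), ← Real.sqrt_sq_eq_abs,
      ← Real.sqrt_mul (sq_nonneg _)]
    exact Real.one_le_sqrt.2 hξa

theorem norm_integral_oscillatory_le_of_one_le_sq_mul (hβ : 1 / 2 ≤ β) (hε : 0 ≤ ε)
    (hh : ContDiffOn ℝ 1 h (Ici 0)) (hb : ∀ τ, 0 ≤ τ → ‖h τ‖ ≤ ε * (1 + τ) ^ (-β))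
    (hd : ∀ τ, 0 ≤ τ → ‖deriv h τ‖ ≤ ε * (1 + τ) ^ (-1 - β)) (hξa : 1 ≤ ξ ^ 2 * (1 + a))
    (ha : 0 ≤ a) (hab : a ≤ b) :
    ‖∫ τ in a..b, (ξ : ℂ) * exp (-I * (ξ : ℂ) ^ 2 * τ / 2) * h τ‖ ≤ 2 * (2 + 1 / β) * ε := by
  have hξ : ξ ≠ 0 := by rintro rfl; norm_num at hξa
  have hβ0 : 0 < β := by linarith
  refine (norm_integral_oscillatory_le_of_decay hβ0 hε hh hb hd hξ ha hab).trans
    (mul_le_of_le_one_right (by positivity) ?_)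
  exact (div_le_one (abs_pos.2 hξ)).2 (one_add_rpow_neg_le_abs hβ ha hξa)

theorem norm_integral_oscillatory_le_of_sq_mul_le_one (hβ : 1 / 2 ≤ β) (hε : 0 ≤ ε)
    (hb : ∀ τ, 0 ≤ τ → ‖h τ‖ ≤ ε * (1 + τ) ^ (-β)) (hb0 : 0 ≤ b) (hξb : ξ ^ 2 * b ≤ 1) :
    ‖∫ τ in (0 : ℝ)..b, (ξ : ℂ) * exp (-I * (ξ : ℂ) ^ 2 * τ / 2) * h τ‖ ≤ 2 * ε := by
  have h_sqrt : |ξ| * (√(1 + b) - 1) ≤ 1 := by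
    have hs : √(1 + b) ^ 2 = 1 + b := Real.sq_sqrt (by linarith)
    have hs1 : 1 ≤ √(1 + b) := Real.one_le_sqrt.2 (by linarith)
    refine (pow_le_one_iff_of_nonneg (by positivity) two_ne_zero).1 ?_
    calc (|ξ| * (√(1 + b) - 1)) ^ 2 = ξ ^ 2 * (√(1 + b) - 1) ^ 2 := by rw [mul_pow, sq_abs]
      _ ≤ ξ ^ 2 * b := by gcongr; nlinarith
      _ ≤ 1 := hξb
  calc ‖∫ τ in (0 : ℝ)..b, (ξ : ℂ) * exp (-I * (ξ : ℂ) ^ 2 * τ / 2) * h τ‖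
      ≤ ∫ τ in (0 : ℝ)..b, |ξ| * ε * (1 + τ) ^ (-(1 / 2 : ℝ)) := by
        refine intervalIntegral.norm_integral_le_of_norm_le hb0
          (Eventually.of_forall fun τ hτ => ?_)
          ((intervalIntegrable_one_add_rpow _ (by norm_num) (by linarith)).const_mul _)
        rw [norm_oscillatory_integrand, mul_assoc]
        gcongr
        exact (hb τ hτ.1.le).trans (mul_le_mul_of_nonneg_left
          (Real.rpow_le_rpow_of_exponent_le (by linarith [hτ.1]) (by linarith)) hε)
    _ = 2 * ε * (|ξ| * (√(1 + b) - 1)) := by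
        rw [intervalIntegral.integral_const_mul,
          integral_one_add_rpow (by norm_num) (by norm_num) (by linarith), Real.sqrt_eq_rpow]
        norm_num
        ring
    _ ≤ 2 * ε := mul_le_of_le_one_right (by positivity) h_sqrt

end Decay

/-- Uniform bound for the truncated oscillatory boundary integral under
polynomial decay of the boundary data. -/
theorem oscillatory_truncated_uniform_bound (β : ℝ) (hβ : 1/2 < β) :
    ∃ C > (0:ℝ), ∀ ε : ℝ, 0 < ε → ∀ h : ℝ → ℂ,
      ContDiffOn ℝ 1 h (Set.Ici 0) →
      (∀ τ : ℝ, 0 ≤ τ → ‖h τ‖ ≤ ε * (1 + τ) ^ (-β)) →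
      (∀ τ : ℝ, 0 ≤ τ → ‖deriv h τ‖ ≤ ε * (1 + τ) ^ (-1 - β)) →
      ∀ ξ : ℝ, ∀ t : ℝ, 0 ≤ t →
        ‖∫ τ in (0:ℝ)..t,
            (ξ : ℂ) * Complex.exp (-Complex.I * (ξ : ℂ) ^ 2 * (τ : ℂ) / 2) * h τ‖
          ≤ C * ε := by
  have hβ0 : 0 < β := by linarith
  refine ⟨2 + 2 * (2 + 1 / β), by positivity, fun ε hε h hh hb hd ξ t ht => ?_⟩
  by_cases hξt : ξ ^ 2 * t ≤ 1
  · refine (norm_integral_oscillatory_le_of_sq_mul_le_one hβ.le hε.le hb ht hξt).trans ?_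
    nlinarith [one_div_pos.2 hβ0]
  rw [not_le] at hξt
  have hξ : 0 < ξ ^ 2 := pos_of_mul_pos_left (by linarith) ht
  set s := (ξ ^ 2)⁻¹
  have hξs : ξ ^ 2 * s = 1 := mul_inv_cancel₀ hξ.ne'
  have hst : s ≤ t := le_of_mul_le_mul_left (by linarith) hξ
  have hξs' : 1 ≤ ξ ^ 2 * (1 + s) := by nlinarith
  rw [← intervalIntegral.integral_add_adjacent_intervals
    (intervalIntegrable_oscillatory_integrand (b := s) hh.continuousOn le_rfl (by positivity))
    (intervalIntegrable_oscillatory_integrand (a := s) hh.continuousOn (by positivity) ht)]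
  refine (norm_add_le_of_le
    (norm_integral_oscillatory_le_of_sq_mul_le_one hβ.le hε.le hb (by positivity) hξs.le)
    (norm_integral_oscillatory_le_of_one_le_sq_mul hβ.le hε.le hh hb hd hξs' (by positivity)
      hst)).trans_eq ?_
  ring
end
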